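/- arXiv:1612.01205 — 6 statements merged into one kernel-verified Lean document; each statement's English description precedes it below -/
import Mathlib

section
/- (MSE bound for the SWITCH estimator.) Fix a reward kernel D ∈ R(σ,Rmax) with mean reward r*(x,a), a measurable reward model r̂ : X×A → ℝ with 0 ≤ r̂(x,a) ≤ Rmax(x,a) for all (x,a), and a threshold τ > 0; write ε(x,a) = r̂(x,a) − r*(x,a). Then the mean squared error of the SWITCH estimator on n i.i.d. samples from P_μ^D satisfies E[(v̂_SWITCH − v^π(D))²] ≤ (2/n)·( E_μ[(σ² + Rmax²)·ρ²·1(ρ ≤ τ)] + E_π[Rmax²·1(ρ > τ)] ) + ( E_π[ε·1(ρ > τ)] )². -/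
open MeasureTheory ProbabilityTheory Real
open scoped ENNReal BigOperators Classical

/-- A policy assigns to each context a probability mass function over actions. -/
structure Policy (X A : Type*) [MeasurableSpace X] [Fintype A] where
  prob : X → A → ℝ
  nonneg : ∀ x a, 0 ≤ prob x a
  sum_one : ∀ x, ∑ a, prob x a = 1
  meas : ∀ a, Measurable fun x => prob x a

variable {X A : Type*} [MeasurableSpace X] [Fintype A] [Nonempty A]
  [MeasurableSpace A] [MeasurableSingletonClass A]

/-- Importance weight ρ(x,a) = π(a|x)/μ(a|x). -/
noncomputable def impW (μp πp : Policy X A) (p : X × A) : ℝ :=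
  πp.prob p.1 p.2 / μp.prob p.1 p.2

/-- E_μ[f] : expectation of f(x,a) for x ∼ λ, a ∼ μ(·|x). -/
noncomputable def Emu (lam : Measure X) (μp : Policy X A) (f : X × A → ℝ) : ℝ :=
  ∫ x, ∑ a, μp.prob x a * f (x, a) ∂lam

/-- The distribution P_μ of (x,a) with x ∼ λ, a ∼ μ(·|x). -/
noncomputable def Policy.joint (lam : Measure X) (μp : Policy X A) : Measure (X × A) :=
  lam.bind fun x => Measure.sum fun a : A => ENNReal.ofReal (μp.prob x a) • Measure.dirac (x, a)

/-- Mean reward r*(x,a) of a reward kernel. -/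
noncomputable def rstar (D : Kernel (X × A) ℝ) (p : X × A) : ℝ := ∫ r, r ∂(D p)

/-- The value of the target policy π. -/
noncomputable def vpi (lam : Measure X) (πp : Policy X A) (D : Kernel (X × A) ℝ) : ℝ :=
  ∫ x, ∑ a, πp.prob x a * rstar D (x, a) ∂lam

/-- The joint distribution P_μ^D of ((x,a),r): x ∼ λ, a ∼ μ(·|x), r ∼ D(·|x,a). -/
noncomputable def sampleMeasure (lam : Measure X) (μp : Policy X A) (D : Kernel (X × A) ℝ) :
    Measure ((X × A) × ℝ) :=
  (Policy.joint lam μp).bind fun p => (D p).map fun r => (p, r)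

/-- The class R(σ,Rmax) of reward kernels: Markov kernels with finite second moments such
that P_μ-a.s. 0 ≤ r*(x,a) ≤ Rmax(x,a) and Var(r|x,a) ≤ σ(x,a)². -/
def InRewardClass (lam : Measure X) (μp : Policy X A) (σf Rmax : X × A → ℝ)
    (D : Kernel (X × A) ℝ) : Prop :=
  IsMarkovKernel D ∧ (∀ p, Integrable (fun r => r ^ 2) (D p)) ∧
    (∀ᵐ p ∂Policy.joint lam μp,
      0 ≤ rstar D p ∧ rstar D p ≤ Rmax p ∧ variance id (D p) ≤ σf p ^ 2)

/-- Minimax risk of off-policy evaluation from n i.i.d. samples. -/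
noncomputable def minimaxRisk (lam : Measure X) (μp πp : Policy X A)
    (σf Rmax : X × A → ℝ) (n : ℕ) : ℝ≥0∞ :=
  ⨅ (vhat : (Fin n → (X × A) × ℝ) → ℝ) (_ : Measurable vhat),
    ⨆ (D : Kernel (X × A) ℝ) (_ : InRewardClass lam μp σf Rmax D),
      ∫⁻ ω, ENNReal.ofReal ((vhat ω - vpi lam πp D) ^ 2)
        ∂(Measure.pi fun _ : Fin n => sampleMeasure lam μp D)

/-- E_π[f] : expectation of f(x,a) for x ∼ λ, a ∼ π(·|x). -/
noncomputable def Epi (lam : Measure X) (πp : Policy X A) (f : X × A → ℝ) : ℝ :=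
  ∫ x, ∑ a, πp.prob x a * f (x, a) ∂lam

/-- The SWITCH estimator with threshold τ and reward model r̂ on n samples. -/
noncomputable def switchEst (μp πp : Policy X A) (rhat : X × A → ℝ) (τ : ℝ) (n : ℕ)
    (ω : Fin n → (X × A) × ℝ) : ℝ :=
  (1 / n : ℝ) * ∑ i, (ω i).2 * impW μp πp (ω i).1 *
      (if impW μp πp (ω i).1 ≤ τ then 1 else 0)
    + (1 / n : ℝ) * ∑ i, ∑ a, rhat ((ω i).1.1, a) * πp.prob (ω i).1.1 a *
      (if τ < impW μp πp ((ω i).1.1, a) then 1 else 0)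

/-!
The SWITCH estimator is the empirical mean of the i.i.d. summands
`h((x,a),r) = ρ 1(ρ ≤ τ) r + ∑ₐ' π(a'|x) r̂(x,a') 1(ρ(x,a') > τ)`, so its mean squared error is
`Var(h)/n + (E h - v^π)²`. The variance is at most `E h² ≤ 2 E[(ρ 1(ρ ≤ τ) r)²] + 2 E[m(x)²]`,
where `m` is the model term. Conditioning on `(x,a)`, the first expectation is
`E_μ[ρ² 1(ρ ≤ τ) E[r² | x,a]]` and `E[r² | x,a] = Var + r*² ≤ σ² + Rmax²`; by Jensen for the
probability weights `π(·|x)`, `m(x)² ≤ E_π[r̂² 1(ρ > τ) | x] ≤ E_π[Rmax² 1(ρ > τ) | x]`.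
Finally `μ ρ = π` turns the mean of the importance-sampling part into `E_π[r* 1(ρ ≤ τ)]`, and
what is left of `E h - v^π` is `E_π[(r̂ - r*) 1(ρ > τ)]`.
-/

attribute [fun_prop] Policy.meas

theorem MeasureTheory.MeasurePreserving.integral_comp_of_aestronglyMeasurable {α β : Type*}
    [MeasurableSpace α] [MeasurableSpace β] {μ : Measure α} {ν : Measure β} {f : α → β}
    (hf : MeasurePreserving f μ ν) {g : β → ℝ} (hg : AEStronglyMeasurable g ν) :
    ∫ x, g (f x) ∂μ = ∫ y, g y ∂ν := by
  rw [← hf.map_eq] at hg ⊢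
  exact (integral_map hf.aemeasurable hg).symm

section SampleMean

variable {Ω : Type*} [MeasurableSpace Ω] {P : Measure Ω} [IsProbabilityMeasure P]

theorem variance_sampleMean {h : Ω → ℝ} (hh : MemLp h 2 P) {n : ℕ} (hn : n ≠ 0) :
    Var[fun ω : Fin n → Ω => (1 / n : ℝ) * ∑ i, h (ω i); Measure.pi fun _ => P]
      = Var[h; P] / n := by
  have hcoord : ∀ i : Fin n, MeasurePreserving (Function.eval i) (Measure.pi fun _ => P) P :=
    measurePreserving_eval _
  have hvar_sum : Var[∑ i, fun ω : Fin n → Ω => h (ω i); Measure.pi fun _ => P]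
      = ∑ _ : Fin n, Var[h; P] := by
    rw [IndepFun.variance_sum (X := fun (i : Fin n) (ω : Fin n → Ω) => h (ω i))
      (fun i _ => hh.comp_measurePreserving (hcoord i))
      fun i _ j _ hij => (iIndepFun_pi fun _ => hh.aemeasurable).indepFun hij]
    exact Finset.sum_congr rfl fun i _ => (hcoord i).variance_fun_comp hh.aemeasurable
  rw [variance_const_mul, ← Finset.sum_fn, hvar_sum, Finset.sum_const, Finset.card_univ,
    Fintype.card_fin, nsmul_eq_mul]
  field_simp

theorem integral_sampleMean {h : Ω → ℝ} (hh : Integrable h P) {n : ℕ} (hn : n ≠ 0) :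
    ∫ ω, (1 / n : ℝ) * ∑ i, h (ω i) ∂(Measure.pi fun _ : Fin n => P) = ∫ x, h x ∂P := by
  have hcoord : ∀ i : Fin n, MeasurePreserving (Function.eval i) (Measure.pi fun _ => P) P :=
    measurePreserving_eval _
  rw [integral_const_mul, integral_finsetSum (f := fun i (ω : Fin n → Ω) => h (ω i)) _
    fun i _ => (hcoord i).integrable_comp_of_integrable hh]
  simp only [fun i => (hcoord i).integral_comp_of_aestronglyMeasurable hh.aestronglyMeasurable,
    Finset.sum_const, Finset.card_univ, Fintype.card_fin, nsmul_eq_mul]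
  field_simp

theorem lintegral_sq_sampleMean_sub {h : Ω → ℝ} (hh : MemLp h 2 P) {n : ℕ} (hn : n ≠ 0)
    (v : ℝ) :
    ∫⁻ ω, ENNReal.ofReal (((1 / n : ℝ) * ∑ i, h (ω i) - v) ^ 2) ∂(Measure.pi fun _ : Fin n => P)
      = ENNReal.ofReal (Var[h; P] / n + (P[h] - v) ^ 2) := by
  have hmean : MemLp (fun ω : Fin n → Ω => (1 / n : ℝ) * ∑ i, h (ω i)) 2
      (Measure.pi fun _ => P) :=
    (memLp_finsetSum _ fun i _ =>
      hh.comp_measurePreserving (measurePreserving_eval _ i)).const_mul _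
  have hcentered : MemLp (fun ω : Fin n → Ω => (1 / n : ℝ) * ∑ i, h (ω i) - v) 2
      (Measure.pi fun _ => P) :=
    hmean.sub (memLp_const v)
  have hvar := variance_eq_sub hcentered
  rw [variance_sub_const hmean.aestronglyMeasurable, variance_sampleMean hh hn,
    integral_sub (hmean.integrable one_le_two) (integrable_const v),
    integral_sampleMean (hh.integrable one_le_two) hn] at hvar
  rw [← ofReal_integral_eq_lintegral_ofReal hcentered.integrable_sq
    (ae_of_all _ fun _ => sq_nonneg _)]
  simp only [Pi.pow_apply, integral_const, probReal_univ, one_smul] at hvar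
  rw [hvar, sub_add_cancel]

end SampleMean

theorem integral_add_sq_le {Ω : Type*} [MeasurableSpace Ω] {P : Measure Ω} {f g : Ω → ℝ}
    (hf : MemLp f 2 P) (hg : MemLp g 2 P) :
    ∫ ω, (f ω + g ω) ^ 2 ∂P ≤ 2 * (∫ ω, f ω ^ 2 ∂P + ∫ ω, g ω ^ 2 ∂P) := by
  rw [← integral_add hf.integrable_sq hg.integrable_sq, ← integral_const_mul]
  exact integral_mono (hf.add hg).integrable_sq
    ((hf.integrable_sq.add hg.integrable_sq).const_mul 2) fun ω => add_sq_le

theorem sq_sum_mul_le_sum_mul_sq {ι : Type*} (s : Finset ι) {w y : ι → ℝ}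
    (hw : ∀ i ∈ s, 0 ≤ w i) (hw1 : ∑ i ∈ s, w i = 1) :
    (∑ i ∈ s, w i * y i) ^ 2 ≤ ∑ i ∈ s, w i * y i ^ 2 := by
  have := Finset.sum_sq_le_sum_mul_sum_of_sq_le_mul s (r := fun i => w i * y i) hw
    (fun i hi => mul_nonneg (hw i hi) (sq_nonneg (y i))) fun i _ => le_of_eq (by ring)
  rwa [hw1, one_mul] at this

theorem ite_le_add_ite_lt (a b : ℝ) :
    ((if a ≤ b then 1 else 0) + if b < a then 1 else 0 : ℝ) = 1 := by
  rcases le_or_gt a b with h | h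
  · simp [h, not_lt.2 h]
  · simp [h, not_le.2 h]

section WeightedPushforward

variable {X Y : Type*} [MeasurableSpace X] [MeasurableSpace Y] {lam : Measure X}
  {w : X → ℝ} {e : X → Y}

theorem integrable_map_withDensity_ofReal_iff (hw : Measurable w) (hw0 : ∀ x, 0 ≤ w x)
    (he : Measurable e) {φ : Y → ℝ} (hφ : Measurable φ) :
    Integrable φ ((lam.withDensity fun x => ENNReal.ofReal (w x)).map e)
      ↔ Integrable (fun x => w x * φ (e x)) lam := by
  rw [integrable_map_measure hφ.aestronglyMeasurable he.aemeasurable,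
    integrable_withDensity_iff_integrable_smul' hw.ennreal_ofReal
      (ae_of_all _ fun _ => ENNReal.ofReal_lt_top)]
  simp only [Function.comp_apply, ENNReal.toReal_ofReal (hw0 _), smul_eq_mul]

theorem integral_map_withDensity_ofReal (hw : Measurable w) (hw0 : ∀ x, 0 ≤ w x)
    (he : Measurable e) {φ : Y → ℝ} (hφ : Measurable φ) :
    ∫ y, φ y ∂((lam.withDensity fun x => ENNReal.ofReal (w x)).map e)
      = ∫ x, w x * φ (e x) ∂lam := by
  rw [integral_map he.aemeasurable hφ.aestronglyMeasurable,
    integral_withDensity_eq_integral_toReal_smul hw.ennreal_ofReal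
      (ae_of_all _ fun _ => ENNReal.ofReal_lt_top)]
  simp only [ENNReal.toReal_ofReal (hw0 _), smul_eq_mul]

end WeightedPushforward

section CompProd

variable {α β : Type*} [MeasurableSpace α] [MeasurableSpace β] {ν : Measure α} [SFinite ν]

theorem MeasureTheory.Integrable.integral_measure_compProd {E : Type*} [NormedAddCommGroup E]
    [NormedSpace ℝ E] {κ : Kernel α β} [IsSFiniteKernel κ] {f : α × β → E}
    (hf : Integrable f (ν ⊗ₘ κ)) : Integrable (fun a => ∫ b, f (a, b) ∂κ a) ν := by
  simpa using Integrable.integral_compProd (κ := Kernel.const Unit ν)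
    (η := Kernel.prodMkLeft Unit κ) (a := ()) hf

theorem MeasureTheory.Measure.bind_map_prodMk_eq_compProd (κ : Kernel α β) [IsSFiniteKernel κ] :
    ν.bind (fun a => (κ a).map (a, ·)) = ν ⊗ₘ κ := by
  have hmeas : Measurable fun a => (κ a).map (a, ·) :=
    Measure.measurable_of_measurable_coe _ fun t ht => by
      simpa only [Measure.map_apply measurable_prodMk_left ht]
        using Kernel.measurable_kernel_prodMk_left ht
  ext s hs
  rw [Measure.bind_apply hs hmeas.aemeasurable, Measure.compProd_apply hs]
  simp only [Measure.map_apply measurable_prodMk_left hs]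

@[fun_prop]
theorem measurable_integral_sq_kernel (κ : Kernel α ℝ) : Measurable fun a => ∫ r, r ^ 2 ∂κ a :=
  (StronglyMeasurable.integral_kernel (by fun_prop)).measurable

variable {κ : Kernel α ℝ} [IsSFiniteKernel κ] {w : α → ℝ}

theorem integrable_sq_mul_snd_compProd (hw : Measurable w)
    (hκ : ∀ a, Integrable (fun r => r ^ 2) (κ a))
    (h : Integrable (fun a => w a ^ 2 * ∫ r, r ^ 2 ∂κ a) ν) :
    Integrable (fun q : α × ℝ => (w q.1 * q.2) ^ 2) (ν ⊗ₘ κ) := by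
  refine (Measure.integrable_compProd_iff (by fun_prop)).2
    ⟨ae_of_all _ fun a => ?_, h.congr (ae_of_all _ fun a => ?_)⟩
  · simpa only [mul_pow] using (hκ a).const_mul (w a ^ 2)
  · simp only [mul_pow, norm_mul, norm_pow, Real.norm_eq_abs, sq_abs]
    rw [integral_const_mul]

theorem integral_sq_mul_snd_compProd
    (h : Integrable (fun q : α × ℝ => (w q.1 * q.2) ^ 2) (ν ⊗ₘ κ)) :
    ∫ q, (w q.1 * q.2) ^ 2 ∂(ν ⊗ₘ κ) = ∫ a, w a ^ 2 * ∫ r, r ^ 2 ∂κ a ∂ν := by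
  rw [Measure.integral_compProd h]
  simp_rw [mul_pow, integral_const_mul]

theorem integral_mul_snd_compProd (h : Integrable (fun q : α × ℝ => w q.1 * q.2) (ν ⊗ₘ κ)) :
    ∫ q, w q.1 * q.2 ∂(ν ⊗ₘ κ) = ∫ a, w a * ∫ r, r ∂κ a ∂ν := by
  rw [Measure.integral_compProd h]
  congr 1 with a
  exact integral_const_mul (w a) fun r => r

end CompProd

@[fun_prop]
theorem measurable_rstar {X A : Type*} [MeasurableSpace X] [MeasurableSpace A]
    (D : Kernel (X × A) ℝ) : Measurable (rstar D) :=
  (StronglyMeasurable.integral_kernel stronglyMeasurable_id).measurable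

namespace Policy

variable {X A : Type*} [MeasurableSpace X] [Fintype A] (lam : Measure X) (μp : Policy X A)

def avg (f : X × A → ℝ) (x : X) : ℝ :=
  ∑ a, μp.prob x a * f (x, a)

theorem sum_ofReal_prob (x : X) : ∑ a, ENNReal.ofReal (μp.prob x a) = 1 := by
  rw [← ENNReal.ofReal_sum_of_nonneg fun a _ => μp.nonneg x a, μp.sum_one, ENNReal.ofReal_one]

variable [MeasurableSpace A]

theorem sum_ofReal_smul_dirac_apply (x : X) {s : Set (X × A)} (hs : MeasurableSet s) :
    (Measure.sum fun a => ENNReal.ofReal (μp.prob x a) • Measure.dirac (x, a)) s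
      = ∑ a, ENNReal.ofReal (μp.prob x a) * s.indicator 1 (x, a) := by
  simp only [Measure.sum_apply _ hs, tsum_fintype, Measure.smul_apply, smul_eq_mul,
    Measure.dirac_apply' _ hs]

theorem measurable_sum_ofReal_smul_dirac :
    Measurable fun x => Measure.sum fun a => ENNReal.ofReal (μp.prob x a) • Measure.dirac (x, a) :=
  Measure.measurable_of_measurable_coe _ fun s hs => by
    simp only [sum_ofReal_smul_dirac_apply μp _ hs]
    exact Finset.measurable_sum _ fun a _ => (μp.meas a).ennreal_ofReal.mul
      ((measurable_one.indicator hs).comp measurable_prodMk_right)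

theorem joint_eq_sum : Policy.joint lam μp
    = ∑ a, (lam.withDensity fun x => ENNReal.ofReal (μp.prob x a)).map (fun x => (x, a)) := by
  ext s hs
  rw [Policy.joint, Measure.bind_apply hs (measurable_sum_ofReal_smul_dirac μp).aemeasurable,
    Measure.finsetSum_apply]
  simp only [sum_ofReal_smul_dirac_apply μp _ hs]
  rw [lintegral_finsetSum (f := fun a x => ENNReal.ofReal (μp.prob x a) * s.indicator 1 (x, a))
    _ fun a _ => (μp.meas a).ennreal_ofReal.mul
      ((measurable_one.indicator hs).comp measurable_prodMk_right)]
  refine Finset.sum_congr rfl fun a _ => ?_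
  rw [Measure.map_apply measurable_prodMk_right hs,
    withDensity_apply _ (measurable_prodMk_right hs), ← lintegral_indicator (measurable_prodMk_right hs)]
  congr 1 with x
  by_cases hx : (x, a) ∈ s <;> simp [hx]

theorem map_fst_joint : (Policy.joint lam μp).map Prod.fst = lam := by
  ext s hs
  rw [Measure.map_apply measurable_fst hs, joint_eq_sum, Measure.finsetSum_apply]
  simp only [Measure.map_apply measurable_prodMk_right (measurable_fst hs),
    withDensity_apply _ (measurable_prodMk_right (measurable_fst hs))]
  change ∑ a, ∫⁻ x in s, ENNReal.ofReal (μp.prob x a) ∂lam = lam s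
  rw [← lintegral_finsetSum _ fun a _ => (μp.meas a).ennreal_ofReal]
  simp only [sum_ofReal_prob, setLIntegral_one]

theorem measurePreserving_fst_joint : MeasurePreserving Prod.fst (Policy.joint lam μp) lam :=
  ⟨measurable_fst, map_fst_joint lam μp⟩

instance isProbabilityMeasure_joint [IsProbabilityMeasure lam] :
    IsProbabilityMeasure (Policy.joint lam μp) :=
  (Measure.isProbabilityMeasure_map_iff measurable_fst.aemeasurable).1 <| by
    rw [map_fst_joint]; infer_instance

theorem measurePreserving_fst_fst_compProd [IsProbabilityMeasure lam] {β : Type*}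
    [MeasurableSpace β] (κ : Kernel (X × A) β) [IsMarkovKernel κ] :
    MeasurePreserving (fun q : (X × A) × β => q.1.1) (Policy.joint lam μp ⊗ₘ κ) lam :=
  (measurePreserving_fst_joint lam μp).comp ⟨measurable_fst, Measure.fst_compProd _ κ⟩

theorem integrable_joint_iff {φ : X × A → ℝ} (hφ : Measurable φ) :
    Integrable φ (Policy.joint lam μp)
      ↔ ∀ a, Integrable (fun x => μp.prob x a * φ (x, a)) lam := by
  simp only [joint_eq_sum, integrable_finsetSum_measure, Finset.mem_univ, true_implies,
    integrable_map_withDensity_ofReal_iff (μp.meas _) (μp.nonneg · _) measurable_prodMk_right hφ]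

theorem integrable_avg {φ : X × A → ℝ} (hφ : Measurable φ)
    (h : Integrable φ (Policy.joint lam μp)) : Integrable (μp.avg φ) lam :=
  integrable_finsetSum _ fun a _ => (integrable_joint_iff lam μp hφ).1 h a

theorem integrable_joint_of_integrable_avg {ψ : X × A → ℝ} (hψ : Measurable ψ)
    (hψ0 : ∀ p, 0 ≤ ψ p) (h : Integrable (μp.avg ψ) lam) : Integrable ψ (Policy.joint lam μp) :=
  (integrable_joint_iff lam μp hψ).2 fun a => h.mono' (by fun_prop) <| ae_of_all _ fun x => by
    rw [Real.norm_of_nonneg (mul_nonneg (μp.nonneg x a) (hψ0 _))]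
    exact Finset.single_le_sum (f := fun b => μp.prob x b * ψ (x, b))
      (fun b _ => mul_nonneg (μp.nonneg x b) (hψ0 _)) (Finset.mem_univ a)

theorem integral_joint {φ : X × A → ℝ} (hφ : Measurable φ)
    (hint : Integrable φ (Policy.joint lam μp)) :
    ∫ p, φ p ∂(Policy.joint lam μp) = Emu lam μp φ := by
  have hcomp := (integrable_joint_iff lam μp hφ).1 hint
  rw [joint_eq_sum, integral_finsetSum_measure, Emu, integral_finsetSum _ fun a _ => hcomp a]
  · simp only [integral_map_withDensity_ofReal (μp.meas _) (μp.nonneg · _)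
      measurable_prodMk_right hφ]
  · exact fun a _ => (integrable_map_withDensity_ofReal_iff (μp.meas a) (μp.nonneg · a)
      measurable_prodMk_right hφ).2 (hcomp a)

end Policy

section Switch

variable {X A : Type*} [MeasurableSpace X] [Fintype A]

noncomputable def switchWeight (μp πp : Policy X A) (τ : ℝ) (p : X × A) : ℝ :=
  impW μp πp p * if impW μp πp p ≤ τ then 1 else 0

noncomputable def switchModelTerm (μp πp : Policy X A) (rhat : X × A → ℝ) (τ : ℝ) : X → ℝ :=
  πp.avg fun p => rhat p * if τ < impW μp πp p then 1 else 0

noncomputable def switchSummand (μp πp : Policy X A) (rhat : X × A → ℝ) (τ : ℝ)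
    (q : (X × A) × ℝ) : ℝ :=
  switchWeight μp πp τ q.1 * q.2 + switchModelTerm μp πp rhat τ q.1.1

noncomputable def switchISMomentBound (μp πp : Policy X A) (σf Rmax : X × A → ℝ) (τ : ℝ)
    (p : X × A) : ℝ :=
  (σf p ^ 2 + Rmax p ^ 2) * impW μp πp p ^ 2 * if impW μp πp p ≤ τ then 1 else 0

noncomputable def switchModelMomentBound (μp πp : Policy X A) (Rmax : X × A → ℝ) (τ : ℝ)
    (p : X × A) : ℝ :=
  Rmax p ^ 2 * if τ < impW μp πp p then 1 else 0

theorem switchEst_eq_sampleMean (μp πp : Policy X A) (rhat : X × A → ℝ) (τ : ℝ) (n : ℕ)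
    (ω : Fin n → (X × A) × ℝ) :
    switchEst μp πp rhat τ n ω = (1 / n : ℝ) * ∑ i, switchSummand μp πp rhat τ (ω i) := by
  simp only [switchEst, switchSummand, switchWeight, switchModelTerm, Policy.avg, ← mul_add,
    ← Finset.sum_add_distrib]
  congr 1
  refine Finset.sum_congr rfl fun i _ => ?_
  congr 1
  · ring
  · exact Finset.sum_congr rfl fun a _ => by ring

theorem prob_mul_impW {μp πp : Policy X A} (habs : ∀ x a, 0 < πp.prob x a → 0 < μp.prob x a)
    (x : X) (a : A) : μp.prob x a * impW μp πp (x, a) = πp.prob x a := by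
  rcases (μp.nonneg x a).eq_or_lt with hμ | hμ
  · have hπ : πp.prob x a = 0 :=
      (πp.nonneg x a).eq_or_lt.elim Eq.symm fun hπ => absurd (habs x a hπ) hμ.not_lt
    rw [← hμ, hπ, zero_mul]
  · exact mul_div_cancel₀ _ hμ.ne'

theorem switchModelTerm_sq_le (μp πp : Policy X A) {rhat Rmax : X × A → ℝ}
    (hrb : ∀ p, 0 ≤ rhat p ∧ rhat p ≤ Rmax p) (τ : ℝ) (x : X) :
    switchModelTerm μp πp rhat τ x ^ 2 ≤ πp.avg (switchModelMomentBound μp πp Rmax τ) x := by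
  refine (sq_sum_mul_le_sum_mul_sq _ (fun a _ => πp.nonneg x a) (πp.sum_one x)).trans
    (Finset.sum_le_sum fun a _ => mul_le_mul_of_nonneg_left ?_ (πp.nonneg x a))
  obtain ⟨h0, hR⟩ := hrb (x, a)
  dsimp only [switchModelMomentBound]
  split_ifs <;> nlinarith

theorem avg_switchWeight_mul {μp πp : Policy X A}
    (habs : ∀ x a, 0 < πp.prob x a → 0 < μp.prob x a) (τ : ℝ) (f : X × A → ℝ) :
    μp.avg (fun p => switchWeight μp πp τ p * f p)
      = πp.avg (fun p => (if impW μp πp p ≤ τ then 1 else 0) * f p) := by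
  funext x
  refine Finset.sum_congr rfl fun a _ => ?_
  dsimp only
  rw [switchWeight, ← prob_mul_impW habs x a]
  ring

variable [MeasurableSpace A]

theorem avg_rstar_eq {πp μp : Policy X A} (D : Kernel (X × A) ℝ) (rhat : X × A → ℝ) (τ : ℝ)
    (x : X) :
    πp.avg (rstar D) x
      = πp.avg (fun p => (if impW μp πp p ≤ τ then 1 else 0) * rstar D p) x
        + switchModelTerm μp πp rhat τ x
        - πp.avg (fun p => (rhat p - rstar D p) * if τ < impW μp πp p then 1 else 0) x := by
  simp only [Policy.avg, switchModelTerm, ← Finset.sum_add_distrib, ← Finset.sum_sub_distrib]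
  refine Finset.sum_congr rfl fun a _ => ?_
  linear_combination -(πp.prob x a * rstar D (x, a)) * ite_le_add_ite_lt (impW μp πp (x, a)) τ

theorem InRewardClass.ae_integral_sq_le {lam : Measure X} {μp : Policy X A}
    {σf Rmax : X × A → ℝ} {D : Kernel (X × A) ℝ} (hD : InRewardClass lam μp σf Rmax D) :
    ∀ᵐ p ∂Policy.joint lam μp, ∫ r, r ^ 2 ∂D p ≤ σf p ^ 2 + Rmax p ^ 2 := by
  obtain ⟨hMarkov, hL2, hae⟩ := hD
  filter_upwards [hae] with p ⟨h0, hR, hvar⟩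
  have hmem : MemLp id 2 (D p) :=
    (memLp_two_iff_integrable_sq aestronglyMeasurable_id).2 (hL2 p)
  have hsecond : ∫ r, r ^ 2 ∂D p = Var[id; D p] + rstar D p ^ 2 := by
    rw [variance_eq_sub hmem, rstar]
    simp
  rw [hsecond]
  gcongr

variable [MeasurableSingletonClass A]

@[fun_prop]
theorem measurable_impW (μp πp : Policy X A) : Measurable (impW μp πp) :=
  measurable_from_prod_countable_left fun a => (πp.meas a).div (μp.meas a)

@[fun_prop]
theorem measurable_ite_impW_le (μp πp : Policy X A) (τ : ℝ) :
    Measurable fun p => if impW μp πp p ≤ τ then (1 : ℝ) else 0 :=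
  Measurable.ite (measurableSet_le (measurable_impW μp πp) measurable_const)
    measurable_const measurable_const

@[fun_prop]
theorem measurable_ite_lt_impW (μp πp : Policy X A) (τ : ℝ) :
    Measurable fun p => if τ < impW μp πp p then (1 : ℝ) else 0 :=
  Measurable.ite (measurableSet_lt measurable_const (measurable_impW μp πp))
    measurable_const measurable_const

@[fun_prop]
theorem measurable_switchWeight (μp πp : Policy X A) (τ : ℝ) :
    Measurable (switchWeight μp πp τ) := by
  unfold switchWeight; fun_prop

theorem measurable_switchModelTerm (μp πp : Policy X A) {rhat : X × A → ℝ}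
    (hrm : Measurable rhat) (τ : ℝ) : Measurable (switchModelTerm μp πp rhat τ) :=
  Finset.measurable_sum _ fun a _ => (πp.meas a).mul
    ((hrm.mul (measurable_ite_lt_impW μp πp τ)).comp measurable_prodMk_right)

section ImportanceSampling

variable {lam : Measure X} {μp πp : Policy X A} {σf Rmax : X × A → ℝ} {D : Kernel (X × A) ℝ}
  {τ : ℝ}

theorem integrable_switchWeight_sq_mul_integral_sq (hσm : Measurable σf)
    (hRm : Measurable Rmax) (hD : InRewardClass lam μp σf Rmax D)
    (hint1 : Integrable (μp.avg (switchISMomentBound μp πp σf Rmax τ)) lam) :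
    Integrable (fun p => switchWeight μp πp τ p ^ 2 * ∫ r, r ^ 2 ∂D p) (Policy.joint lam μp) ∧
      ∫ p, switchWeight μp πp τ p ^ 2 * ∫ r, r ^ 2 ∂D p ∂(Policy.joint lam μp)
        ≤ Emu lam μp (switchISMomentBound μp πp σf Rmax τ) := by
  have := hD.1
  set ψ := switchISMomentBound μp πp σf Rmax τ
  have hψm : Measurable ψ := by unfold ψ switchISMomentBound; fun_prop
  have hψ : Integrable ψ (Policy.joint lam μp) :=
    Policy.integrable_joint_of_integrable_avg lam μp hψm
      (fun p => by unfold ψ switchISMomentBound; positivity) hint1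
  have hle : ∀ᵐ p ∂Policy.joint lam μp, switchWeight μp πp τ p ^ 2 * ∫ r, r ^ 2 ∂D p ≤ ψ p := by
    filter_upwards [hD.ae_integral_sq_le] with p hp
    have hw : switchWeight μp πp τ p ^ 2
        = impW μp πp p ^ 2 * if impW μp πp p ≤ τ then 1 else 0 := by
      rw [switchWeight]; split_ifs <;> ring
    calc switchWeight μp πp τ p ^ 2 * ∫ r, r ^ 2 ∂D p
        ≤ (impW μp πp p ^ 2 * if impW μp πp p ≤ τ then 1 else 0) * (σf p ^ 2 + Rmax p ^ 2) := by
          rw [hw]; gcongr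
      _ = ψ p := by unfold ψ switchISMomentBound; ring
  have hint : Integrable (fun p => switchWeight μp πp τ p ^ 2 * ∫ r, r ^ 2 ∂D p)
      (Policy.joint lam μp) :=
    hψ.mono' (by fun_prop) <| hle.mono fun p hp => by
      rwa [Real.norm_of_nonneg (by positivity)]
  exact ⟨hint, (integral_mono_ae hint hψ hle).trans_eq (Policy.integral_joint lam μp hψm hψ)⟩

variable [IsProbabilityMeasure lam]

theorem memLp_switchIS (hσm : Measurable σf) (hRm : Measurable Rmax)
    (hD : InRewardClass lam μp σf Rmax D)
    (hint1 : Integrable (μp.avg (switchISMomentBound μp πp σf Rmax τ)) lam) :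
    MemLp (fun q : (X × A) × ℝ => switchWeight μp πp τ q.1 * q.2) 2
      (Policy.joint lam μp ⊗ₘ D) := by
  have := hD.1
  exact (memLp_two_iff_integrable_sq (by fun_prop)).2 <|
    integrable_sq_mul_snd_compProd (measurable_switchWeight μp πp τ) hD.2.1
      (integrable_switchWeight_sq_mul_integral_sq hσm hRm hD hint1).1

theorem integral_switchIS_sq_le (hσm : Measurable σf) (hRm : Measurable Rmax)
    (hD : InRewardClass lam μp σf Rmax D)
    (hint1 : Integrable (μp.avg (switchISMomentBound μp πp σf Rmax τ)) lam) :
    ∫ q, (switchWeight μp πp τ q.1 * q.2) ^ 2 ∂(Policy.joint lam μp ⊗ₘ D)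
      ≤ Emu lam μp (switchISMomentBound μp πp σf Rmax τ) := by
  have := hD.1
  rw [integral_sq_mul_snd_compProd (memLp_switchIS hσm hRm hD hint1).integrable_sq]
  exact (integrable_switchWeight_sq_mul_integral_sq hσm hRm hD hint1).2

end ImportanceSampling

section ModelTerm

variable {lam : Measure X} {μp πp : Policy X A} {rhat Rmax : X × A → ℝ} {τ : ℝ}

theorem memLp_switchModelTerm (hrm : Measurable rhat)
    (hrb : ∀ p, 0 ≤ rhat p ∧ rhat p ≤ Rmax p)
    (hint2 : Integrable (πp.avg (switchModelMomentBound μp πp Rmax τ)) lam) :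
    MemLp (switchModelTerm μp πp rhat τ) 2 lam := by
  have hm := measurable_switchModelTerm μp πp hrm τ
  refine (memLp_two_iff_integrable_sq hm.aestronglyMeasurable).2 <|
    hint2.mono' (by fun_prop) <| ae_of_all _ fun x => ?_
  rw [Real.norm_of_nonneg (sq_nonneg _)]
  exact switchModelTerm_sq_le μp πp hrb τ x

theorem integral_switchModelTerm_sq_le (hrm : Measurable rhat)
    (hrb : ∀ p, 0 ≤ rhat p ∧ rhat p ≤ Rmax p)
    (hint2 : Integrable (πp.avg (switchModelMomentBound μp πp Rmax τ)) lam) :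
    ∫ x, switchModelTerm μp πp rhat τ x ^ 2 ∂lam
      ≤ Epi lam πp (switchModelMomentBound μp πp Rmax τ) :=
  integral_mono (memLp_switchModelTerm hrm hrb hint2).integrable_sq hint2
    (switchModelTerm_sq_le μp πp hrb τ)

end ModelTerm

variable {lam : Measure X} [IsProbabilityMeasure lam] {μp πp : Policy X A}
  {σf Rmax : X × A → ℝ} {D : Kernel (X × A) ℝ} {rhat : X × A → ℝ} {τ : ℝ}

theorem integral_switchSummand_sub_vpi (habs : ∀ x a, 0 < πp.prob x a → 0 < μp.prob x a)
    (hσm : Measurable σf) (hRm : Measurable Rmax) (hD : InRewardClass lam μp σf Rmax D)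
    (hrm : Measurable rhat) (hrb : ∀ p, 0 ≤ rhat p ∧ rhat p ≤ Rmax p)
    (hint1 : Integrable (μp.avg (switchISMomentBound μp πp σf Rmax τ)) lam)
    (hint2 : Integrable (πp.avg (switchModelMomentBound μp πp Rmax τ)) lam)
    (hint3 : Integrable
      (πp.avg fun p => (rhat p - rstar D p) * if τ < impW μp πp p then 1 else 0) lam) :
    ∫ q, switchSummand μp πp rhat τ q ∂(Policy.joint lam μp ⊗ₘ D) - vpi lam πp D
      = Epi lam πp (fun p => (rhat p - rstar D p) * (if τ < impW μp πp p then 1 else 0)) := by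
  have := hD.1
  have hmp := Policy.measurePreserving_fst_fst_compProd lam μp D
  have hIS := (memLp_switchIS hσm hRm hD hint1).integrable one_le_two
  have hmodel := (memLp_switchModelTerm hrm hrb hint2).integrable one_le_two
  have hmodelS : Integrable (fun q : (X × A) × ℝ => switchModelTerm μp πp rhat τ q.1.1)
      (Policy.joint lam μp ⊗ₘ D) :=
    hmp.integrable_comp_of_integrable hmodel
  have hwr : Integrable (fun p => switchWeight μp πp τ p * rstar D p) (Policy.joint lam μp) :=
    hIS.integral_measure_compProd.congr
      (ae_of_all _ fun p => integral_const_mul (switchWeight μp πp τ p) fun r => r)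
  have hwrm : Measurable fun p => switchWeight μp πp τ p * rstar D p := by fun_prop
  have hA := Policy.integrable_avg lam μp hwrm hwr
  rw [avg_switchWeight_mul habs] at hA
  have hmeanIS : ∫ q, switchWeight μp πp τ q.1 * q.2 ∂(Policy.joint lam μp ⊗ₘ D)
      = ∫ x, πp.avg (fun p => (if impW μp πp p ≤ τ then 1 else 0) * rstar D p) x ∂lam := by
    rw [integral_mul_snd_compProd hIS]
    change ∫ p, switchWeight μp πp τ p * rstar D p ∂Policy.joint lam μp = _
    rw [Policy.integral_joint lam μp hwrm hwr, Emu, ← avg_switchWeight_mul habs]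
    rfl
  have hvpi : vpi lam πp D
      = ∫ x, πp.avg (fun p => (if impW μp πp p ≤ τ then 1 else 0) * rstar D p) x ∂lam
        + ∫ x, switchModelTerm μp πp rhat τ x ∂lam
        - ∫ x, πp.avg (fun p => (rhat p - rstar D p) * if τ < impW μp πp p then 1 else 0) x
            ∂lam := by
    rw [← integral_add hA hmodel, ← integral_sub (hA.fun_add hmodel) hint3]
    exact integral_congr_ae (ae_of_all _ (avg_rstar_eq D rhat τ))
  simp only [switchSummand]
  rw [integral_add hIS hmodelS, hmeanIS,
    hmp.integral_comp_of_aestronglyMeasurable hmodel.aestronglyMeasurable, hvpi, sub_sub_cancel]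
  rfl

theorem memLp_switchSummand (hσm : Measurable σf) (hRm : Measurable Rmax)
    (hD : InRewardClass lam μp σf Rmax D)
    (hrm : Measurable rhat) (hrb : ∀ p, 0 ≤ rhat p ∧ rhat p ≤ Rmax p)
    (hint1 : Integrable (μp.avg (switchISMomentBound μp πp σf Rmax τ)) lam)
    (hint2 : Integrable (πp.avg (switchModelMomentBound μp πp Rmax τ)) lam) :
    MemLp (switchSummand μp πp rhat τ) 2 (Policy.joint lam μp ⊗ₘ D) :=
  have := hD.1
  (memLp_switchIS hσm hRm hD hint1).add <|
    (memLp_switchModelTerm hrm hrb hint2).comp_measurePreserving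
      (Policy.measurePreserving_fst_fst_compProd lam μp D)

theorem integral_switchSummand_sq_le (hσm : Measurable σf) (hRm : Measurable Rmax)
    (hD : InRewardClass lam μp σf Rmax D)
    (hrm : Measurable rhat) (hrb : ∀ p, 0 ≤ rhat p ∧ rhat p ≤ Rmax p)
    (hint1 : Integrable (μp.avg (switchISMomentBound μp πp σf Rmax τ)) lam)
    (hint2 : Integrable (πp.avg (switchModelMomentBound μp πp Rmax τ)) lam) :
    ∫ q, switchSummand μp πp rhat τ q ^ 2 ∂(Policy.joint lam μp ⊗ₘ D)
      ≤ 2 * (Emu lam μp (switchISMomentBound μp πp σf Rmax τ)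
        + Epi lam πp (switchModelMomentBound μp πp Rmax τ)) := by
  have := hD.1
  have hmp := Policy.measurePreserving_fst_fst_compProd lam μp D
  have hmodel := memLp_switchModelTerm hrm hrb hint2
  have hmodelS : MemLp (fun q : (X × A) × ℝ => switchModelTerm μp πp rhat τ q.1.1) 2
      (Policy.joint lam μp ⊗ₘ D) :=
    hmodel.comp_measurePreserving hmp
  refine (integral_add_sq_le (memLp_switchIS hσm hRm hD hint1) hmodelS).trans ?_
  rw [hmp.integral_comp_of_aestronglyMeasurable (g := fun x => switchModelTerm μp πp rhat τ x ^ 2)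
    (hmodel.aestronglyMeasurable.pow 2)]
  gcongr
  · exact integral_switchIS_sq_le hσm hRm hD hint1
  · exact integral_switchModelTerm_sq_le hrm hrb hint2

end Switch

theorem switch_mse_bound_general
    (lam : Measure X) [IsProbabilityMeasure lam] (μp πp : Policy X A)
    (habs : ∀ x a, 0 < πp.prob x a → 0 < μp.prob x a)
    (σf Rmax : X × A → ℝ) (hσm : Measurable σf) (hRm : Measurable Rmax)
    (D : Kernel (X × A) ℝ) (hD : InRewardClass lam μp σf Rmax D)
    (rhat : X × A → ℝ) (hrm : Measurable rhat)
    (hrb : ∀ p, 0 ≤ rhat p ∧ rhat p ≤ Rmax p)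
    (τ : ℝ) (n : ℕ) (hn : 0 < n)
    (hint1 : Integrable (fun x => ∑ a, μp.prob x a *
      ((σf (x, a) ^ 2 + Rmax (x, a) ^ 2) * impW μp πp (x, a) ^ 2 *
        (if impW μp πp (x, a) ≤ τ then 1 else 0))) lam)
    (hint2 : Integrable (fun x => ∑ a, πp.prob x a *
      (Rmax (x, a) ^ 2 * (if τ < impW μp πp (x, a) then 1 else 0))) lam)
    (hint3 : Integrable (fun x => ∑ a, πp.prob x a *
      ((rhat (x, a) - rstar D (x, a)) * (if τ < impW μp πp (x, a) then 1 else 0))) lam) :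
    (∫⁻ ω, ENNReal.ofReal ((switchEst μp πp rhat τ n ω - vpi lam πp D) ^ 2)
        ∂(Measure.pi fun _ : Fin n => sampleMeasure lam μp D))
      ≤ ENNReal.ofReal
        ((2 / n) *
          (Emu lam μp (fun p => (σf p ^ 2 + Rmax p ^ 2) * impW μp πp p ^ 2 *
              (if impW μp πp p ≤ τ then 1 else 0))
            + Epi lam πp (fun p => Rmax p ^ 2 * (if τ < impW μp πp p then 1 else 0)))
          + (Epi lam πp (fun p => (rhat p - rstar D p) *
              (if τ < impW μp πp p then 1 else 0))) ^ 2) := by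
  have := hD.1
  have hS : sampleMeasure lam μp D = Policy.joint lam μp ⊗ₘ D :=
    Measure.bind_map_prodMk_eq_compProd D
  have hsummand := memLp_switchSummand hσm hRm hD hrm hrb hint1 hint2
  simp_rw [switchEst_eq_sampleMean, hS]
  rw [lintegral_sq_sampleMean_sub hsummand hn.ne',
    integral_switchSummand_sub_vpi habs hσm hRm hD hrm hrb hint1 hint2 hint3, div_mul_eq_mul_div]
  gcongr
  exact (variance_le_expectation_sq hsummand.aestronglyMeasurable).trans
    (integral_switchSummand_sq_le hσm hRm hD hrm hrb hint1 hint2)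

/-- Theorem 2: MSE bound for the SWITCH estimator. -/
theorem switch_mse_bound
    (lam : Measure X) [IsProbabilityMeasure lam] (μp πp : Policy X A)
    (habs : ∀ x a, 0 < πp.prob x a → 0 < μp.prob x a)
    (σf Rmax : X × A → ℝ) (hσm : Measurable σf) (hRm : Measurable Rmax)
    (hσnn : ∀ p, 0 ≤ σf p) (hRnn : ∀ p, 0 ≤ Rmax p)
    (D : Kernel (X × A) ℝ) (hD : InRewardClass lam μp σf Rmax D)
    (rhat : X × A → ℝ) (hrm : Measurable rhat)
    (hrb : ∀ p, 0 ≤ rhat p ∧ rhat p ≤ Rmax p)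
    (τ : ℝ) (hτ : 0 < τ) (n : ℕ) (hn : 0 < n)
    (hint1 : Integrable (fun x => ∑ a, μp.prob x a *
      ((σf (x, a) ^ 2 + Rmax (x, a) ^ 2) * impW μp πp (x, a) ^ 2 *
        (if impW μp πp (x, a) ≤ τ then 1 else 0))) lam)
    (hint2 : Integrable (fun x => ∑ a, πp.prob x a *
      (Rmax (x, a) ^ 2 * (if τ < impW μp πp (x, a) then 1 else 0))) lam)
    (hint3 : Integrable (fun x => ∑ a, πp.prob x a *
      ((rhat (x, a) - rstar D (x, a)) * (if τ < impW μp πp (x, a) then 1 else 0))) lam) :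
    (∫⁻ ω, ENNReal.ofReal ((switchEst μp πp rhat τ n ω - vpi lam πp D) ^ 2)
        ∂(Measure.pi fun _ : Fin n => sampleMeasure lam μp D))
      ≤ ENNReal.ofReal
        ((2 / n) *
          (Emu lam μp (fun p => (σf p ^ 2 + Rmax p ^ 2) * impW μp πp p ^ 2 *
              (if impW μp πp p ≤ τ then 1 else 0))
            + Epi lam πp (fun p => Rmax p ^ 2 * (if τ < impW μp πp p then 1 else 0)))
          + (Epi lam πp (fun p => (rhat p - rstar D p) *
              (if τ < impW μp πp p then 1 else 0))) ^ 2) :=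
  switch_mse_bound_general lam μp πp habs σf Rmax hσm hRm D hD rhat hrm hrb τ n hn hint1 hint2 hint3
end

section
/- (Le Cam's two-point method.) Let Ω be a measurable space, P₀ and P₁ probability measures on Ω, (M, d) a (pseudo)metric space, and θ₀, θ₁ ∈ M with Δ = d(θ₀, θ₁). Then for every n ≥ 1 and every measurable estimator θ̂ : Ωⁿ → M, max_{i ∈ {0,1}} E_{P_i^{⊗n}}[ d(θ̂, θ_i) ] ≥ (Δ/8) · exp( −n · D_KL(P₀ ‖ P₁) ), where D_KL denotes the Kullback–Leibler divergence. -/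
open MeasureTheory Real
open scoped ENNReal Classical

/-- Kullback–Leibler divergence: `∫ log(dP/dQ) dP` when `P ≪ Q` and the log-density is
integrable, and `+∞` otherwise. -/
noncomputable def klDiv {α : Type*} [MeasurableSpace α] (P Q : Measure α) : EReal :=
  if P ≪ Q ∧ Integrable (fun x => Real.log (P.rnDeriv Q x).toReal) P
  then ((∫ x, Real.log (P.rnDeriv Q x).toReal ∂P : ℝ) : EReal)
  else ⊤

/-!
Let `A` be the event that `θhat` is at least as close to `θ₁` as to `θ₀`. By the triangle
inequality the two risks are at least `Δ / 2` times the error probabilities `P₀ⁿ(A)` and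
`P₁ⁿ(Aᶜ)` of this test, so it suffices to bound `P₀ⁿ(A) + P₁ⁿ(Aᶜ)` from below. The Bhattacharyya
coefficient `∫ √(dP/dQ) dQ` does this: Cauchy–Schwarz on `A` and on `Aᶜ` shows that its square is
at most `2 (P(A) + Q(Aᶜ))`, it is multiplicative on product measures, and Jensen's inequality for
`exp` bounds it below by `exp (-D_KL(P ‖ Q) / 2)`.
-/

section KullbackLeibler

variable {α : Type*} [MeasurableSpace α] {P Q : Measure α}

lemma klDiv_ne_top_iff :
    klDiv P Q ≠ ⊤ ↔ P ≪ Q ∧ Integrable (fun x => log (P.rnDeriv Q x).toReal) P := by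
  unfold klDiv
  split_ifs with h <;> simp [h]

lemma toReal_klDiv (h : P ≪ Q ∧ Integrable (fun x => log (P.rnDeriv Q x).toReal) P) :
    (klDiv P Q).toReal = ∫ x, log (P.rnDeriv Q x).toReal ∂P := by
  rw [klDiv, if_pos h, EReal.toReal_coe]

end KullbackLeibler

section Testing

variable {M : Type*} [PseudoMetricSpace M]

lemma dist_div_two_le_of_dist_le {a b x : M} (h : dist x b ≤ dist x a) :
    dist a b / 2 ≤ dist x a := by
  linarith [dist_triangle_left a b x]

variable [MeasurableSpace M] [BorelSpace M] {X : Type*} [MeasurableSpace X]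

lemma measurable_dist_comp_const {f : X → M} (hf : Measurable f) (c : M) :
    Measurable fun x => dist (f x) c :=
  (continuous_id.dist continuous_const).measurable.comp hf

lemma ofReal_dist_div_two_mul_le_lintegral (μ : Measure X) {f : X → M} (hf : Measurable f)
    {a b : M} {s : Set X} (hs : ∀ x ∈ s, dist (f x) b ≤ dist (f x) a) :
    ENNReal.ofReal (dist a b / 2) * μ s ≤ ∫⁻ x, ENNReal.ofReal (dist (f x) a) ∂μ := by
  refine le_trans ?_ <| mul_meas_ge_le_lintegral₀
    (measurable_dist_comp_const hf a).ennreal_ofReal.aemeasurable (ENNReal.ofReal (dist a b / 2))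
  gcongr
  exact fun x hx => ENNReal.ofReal_le_ofReal (dist_div_two_le_of_dist_le (hs x hx))

lemma exists_ofReal_dist_div_four_mul_le_max_lintegral (μ₀ μ₁ : Measure X) {f : X → M}
    (hf : Measurable f) (a b : M) :
    ∃ A, MeasurableSet A ∧ ENNReal.ofReal (dist a b / 4) * (μ₀ A + μ₁ Aᶜ) ≤
      max (∫⁻ x, ENNReal.ofReal (dist (f x) a) ∂μ₀)
        (∫⁻ x, ENNReal.ofReal (dist (f x) b) ∂μ₁) := by
  set A := {x | dist (f x) b ≤ dist (f x) a}
  refine ⟨A, measurableSet_le (measurable_dist_comp_const hf b)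
    (measurable_dist_comp_const hf a), ?_⟩
  have h₀ := ofReal_dist_div_two_mul_le_lintegral μ₀ hf (s := A) fun x hx => hx
  have h₁ := ofReal_dist_div_two_mul_le_lintegral μ₁ hf (a := b) (b := a) (s := Aᶜ)
    fun x hx => le_of_not_ge hx
  rw [dist_comm b a] at h₁
  have hquarter : ENNReal.ofReal (dist a b / 4) = ENNReal.ofReal (dist a b / 2) / 2 := by
    rw [← ENNReal.ofReal_ofNat 2, ← ENNReal.ofReal_div_of_pos two_pos]
    ring_nf
  calc ENNReal.ofReal (dist a b / 4) * (μ₀ A + μ₁ Aᶜ)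
      = (ENNReal.ofReal (dist a b / 2) * μ₀ A + ENNReal.ofReal (dist a b / 2) * μ₁ Aᶜ) / 2 := by
        rw [hquarter]; simp only [div_eq_mul_inv]; ring
    _ ≤ _ := ENNReal.div_le_of_le_mul <| by
        rw [mul_two]; exact add_le_add (h₀.trans (le_max_left _ _)) (h₁.trans (le_max_right _ _))

end Testing

section Affinity

variable {α : Type*} [MeasurableSpace α] {P Q : Measure α} {g : α → ℝ≥0∞}

lemma setLIntegral_rpow_half_le_of_withDensity_eq (hg : Measurable g)
    (hPQ : Q.withDensity g = P) {s : Set α} (hs : MeasurableSet s) :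
    ∫⁻ x in s, g x ^ (1/2 : ℝ) ∂Q ≤ Q s ^ (1/2 : ℝ) * P s ^ (1/2 : ℝ) := by
  have hCS := ENNReal.lintegral_mul_le_Lp_mul_Lq (Q.restrict s) Real.HolderConjugate.two_two
    (f := fun _ => 1) aemeasurable_const (hg.pow_const (1/2 : ℝ)).aemeasurable
  have hsq : ∀ x, (g x ^ (1/2 : ℝ)) ^ (2 : ℝ) = g x := fun x => by
    rw [← ENNReal.rpow_mul]; norm_num
  simp only [Pi.mul_apply, one_mul, ENNReal.one_rpow, lintegral_const,
    Measure.restrict_apply_univ, hsq] at hCS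
  rwa [← hPQ, withDensity_apply _ hs]

lemma sq_lintegral_rpow_half_le [IsProbabilityMeasure P] [IsProbabilityMeasure Q]
    (hg : Measurable g) (hPQ : Q.withDensity g = P) {A : Set α} (hA : MeasurableSet A) :
    (∫⁻ x, g x ^ (1/2 : ℝ) ∂Q) ^ 2 ≤ 2 * (P A + Q Aᶜ) := by
  have hsplit : ∫⁻ x, g x ^ (1/2 : ℝ) ∂Q ≤ P A ^ (1/2 : ℝ) + Q Aᶜ ^ (1/2 : ℝ) := by
    rw [← lintegral_add_compl _ hA]
    gcongr
    · exact (setLIntegral_rpow_half_le_of_withDensity_eq hg hPQ hA).trans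
        (mul_le_of_le_one_left' (ENNReal.rpow_le_one prob_le_one (by norm_num)))
    · exact (setLIntegral_rpow_half_le_of_withDensity_eq hg hPQ hA.compl).trans
        (mul_le_of_le_one_right' (ENNReal.rpow_le_one prob_le_one (by norm_num)))
  have hsq : ∀ t : ℝ≥0∞, (t ^ (1/2 : ℝ)) ^ (2 : ℝ) = t := fun t => by
    rw [← ENNReal.rpow_mul]; norm_num
  rw [← ENNReal.rpow_two]
  calc _ ≤ (P A ^ (1/2 : ℝ) + Q Aᶜ ^ (1/2 : ℝ)) ^ (2 : ℝ) := by gcongr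
    _ ≤ 2 ^ ((2 : ℝ) - 1) * ((P A ^ (1/2 : ℝ)) ^ (2 : ℝ) + (Q Aᶜ ^ (1/2 : ℝ)) ^ (2 : ℝ)) :=
        ENNReal.rpow_add_le_mul_rpow_add_rpow _ _ one_le_two
    _ = 2 * (P A + Q Aᶜ) := by norm_num [hsq]

end Affinity

section Jensen

variable {α : Type*} [MeasurableSpace α] {P Q : Measure α}
  [IsProbabilityMeasure P] [IsProbabilityMeasure Q]

lemma ofReal_exp_neg_half_integral_log_rnDeriv_le (hPQ : P ≪ Q)
    (hint : Integrable (fun x => log (P.rnDeriv Q x).toReal) P) :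
    ENNReal.ofReal (exp (-(∫ x, log (P.rnDeriv Q x).toReal ∂P) / 2)) ≤
      ∫⁻ x, P.rnDeriv Q x ^ (1/2 : ℝ) ∂Q := by
  set p := P.rnDeriv Q
  have hp : Measurable p := Measure.measurable_rnDeriv P Q
  have hchange : ∫⁻ x, p x ^ (-(1/2) : ℝ) ∂P = ∫⁻ x, p x ^ (1/2 : ℝ) ∂Q := by
    rw [← lintegral_rnDeriv_mul hPQ (hp.pow_const _).aemeasurable]
    refine lintegral_congr_ae ((Measure.rnDeriv_lt_top P Q).mono fun x hx => ?_)
    change p x * p x ^ (-(1/2) : ℝ) = p x ^ (1/2 : ℝ)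
    rcases eq_or_ne (p x) 0 with h0 | h0
    · simp [h0]
    · nth_rw 1 [← ENNReal.rpow_one (p x)]
      rw [← ENNReal.rpow_add _ _ h0 hx.ne]
      norm_num
  have hfin : ∫⁻ x, p x ^ (-(1/2) : ℝ) ∂P ≠ ⊤ := by
    have := setLIntegral_rpow_half_le_of_withDensity_eq hp
      (Measure.withDensity_rnDeriv_eq P Q hPQ) MeasurableSet.univ
    simp only [Measure.restrict_univ, measure_univ, ENNReal.one_rpow, mul_one] at this
    exact hchange ▸ ne_top_of_le_ne_top ENNReal.one_ne_top this
  have hexp : (fun x => exp (-(1/2) * log (p x).toReal)) =ᵐ[P]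
      fun x => (p x ^ (-(1/2) : ℝ)).toReal := by
    filter_upwards [Measure.rnDeriv_pos hPQ, hPQ.ae_le (Measure.rnDeriv_lt_top P Q)]
      with x h0 htop
    rw [← ENNReal.toReal_rpow, Real.rpow_def_of_pos (ENNReal.toReal_pos h0.ne' htop.ne),
      mul_comm]
  have hint_exp : Integrable (fun x => (p x ^ (-(1/2) : ℝ)).toReal) P :=
    integrable_toReal_of_lintegral_ne_top (hp.pow_const _).aemeasurable hfin
  have hjensen := ConvexOn.map_integral_le convexOn_exp continuous_exp.continuousOn
    isClosed_univ (Filter.Eventually.of_forall fun _ => Set.mem_univ _)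
    (hint.const_mul (-(1/2))) (hint_exp.congr hexp.symm)
  rw [integral_const_mul, integral_congr_ae hexp,
    integral_toReal (hp.pow_const _).aemeasurable
      (ae_lt_top' (hp.pow_const _).aemeasurable hfin), hchange] at hjensen
  exact ENNReal.ofReal_le_of_le_toReal (by convert hjensen using 2; ring)

end Jensen

section Product

variable {ι : Type*} [Fintype ι] {Ω : ι → Type*} [∀ i, MeasurableSpace (Ω i)]

open ProbabilityTheory in
lemma lintegral_pi_prod_eq_prod_lintegral (μ : ∀ i, Measure (Ω i))
    [∀ i, IsProbabilityMeasure (μ i)] {f : ∀ i, Ω i → ℝ≥0∞} (hf : ∀ i, Measurable (f i)) :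
    ∫⁻ x, ∏ i, f i (x i) ∂Measure.pi μ = ∏ i, ∫⁻ a, f i a ∂μ i := by
  refine (lintegral_prod_eq_prod_lintegral_of_indepFun Finset.univ
    (fun i (x : ∀ i, Ω i) => f i (x i)) (iIndepFun_pi fun i => (hf i).aemeasurable)
    fun i => (hf i).comp (measurable_pi_apply i)).trans ?_
  exact Finset.prod_congr rfl fun i _ => (measurePreserving_eval μ i).lintegral_comp (hf i)

lemma pi_withDensity_prod {P Q : ∀ i, Measure (Ω i)} [∀ i, IsProbabilityMeasure (Q i)]
    [∀ i, SigmaFinite (P i)] {g : ∀ i, Ω i → ℝ≥0∞} (hg : ∀ i, Measurable (g i))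
    (hPQ : ∀ i, (Q i).withDensity (g i) = P i) :
    (Measure.pi Q).withDensity (fun x => ∏ i, g i (x i)) = Measure.pi P := by
  refine (Measure.pi_eq fun s hs => ?_).symm
  have hind : (Set.univ.pi s).indicator (fun x => ∏ i, g i (x i)) =
      fun x => ∏ i, (s i).indicator (g i) (x i) := by
    ext x
    simp only [Set.indicator, Set.mem_univ_pi, Finset.prod_ite_zero, Finset.mem_univ,
      true_implies]
  rw [withDensity_apply _ (.univ_pi hs), ← lintegral_indicator (.univ_pi hs), hind,
    lintegral_pi_prod_eq_prod_lintegral Q fun i => (hg i).indicator (hs i)]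
  simp_rw [lintegral_indicator (hs _), ← withDensity_apply _ (hs _), hPQ]

end Product

lemma ofReal_exp_neg_card_mul_integral_log_rnDeriv_le {ι Ω : Type*} [Fintype ι] [MeasurableSpace Ω]
    {P Q : Measure Ω} [IsProbabilityMeasure P] [IsProbabilityMeasure Q] (hPQ : P ≪ Q)
    (hint : Integrable (fun x => log (P.rnDeriv Q x).toReal) P) {A : Set (ι → Ω)}
    (hA : MeasurableSet A) :
    ENNReal.ofReal (exp (-(Fintype.card ι) * ∫ x, log (P.rnDeriv Q x).toReal ∂P)) ≤
      2 * (Measure.pi (fun _ : ι => P) A + Measure.pi (fun _ : ι => Q) Aᶜ) := by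
  set p := P.rnDeriv Q
  set K := ∫ x, log (p x).toReal ∂P
  have hp : Measurable p := Measure.measurable_rnDeriv P Q
  have hdens := pi_withDensity_prod (ι := ι) (Ω := fun _ => Ω) (fun _ => hp)
    fun _ => Measure.withDensity_rnDeriv_eq P Q hPQ
  have htensor : ∫⁻ x, (∏ i, p (x i)) ^ (1/2 : ℝ) ∂Measure.pi (fun _ : ι => Q) =
      (∫⁻ a, p a ^ (1/2 : ℝ) ∂Q) ^ Fintype.card ι := by
    simp_rw [← ENNReal.prod_rpow_of_nonneg (by norm_num : (0 : ℝ) ≤ 1/2)]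
    rw [lintegral_pi_prod_eq_prod_lintegral _ fun _ => hp.pow_const _, Finset.prod_const,
      Finset.card_univ]
  calc ENNReal.ofReal (exp (-(Fintype.card ι) * K))
      = ENNReal.ofReal (exp (-K / 2)) ^ (2 * Fintype.card ι) := by
        rw [← ENNReal.ofReal_pow (exp_nonneg _), ← exp_nat_mul]
        congr 2
        push_cast
        ring
    _ ≤ (∫⁻ a, p a ^ (1/2 : ℝ) ∂Q) ^ (2 * Fintype.card ι) := by
        gcongr
        exact ofReal_exp_neg_half_integral_log_rnDeriv_le hPQ hint
    _ = (∫⁻ x, (∏ i, p (x i)) ^ (1/2 : ℝ) ∂Measure.pi (fun _ : ι => Q)) ^ 2 := by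
        rw [htensor, ← pow_mul, mul_comm]
    _ ≤ _ := sq_lintegral_rpow_half_le
        (Finset.measurable_prod _ fun i _ => hp.comp (measurable_pi_apply i)) hdens hA

theorem le_cam_two_point_general
    {Ω : Type*} [MeasurableSpace Ω] (P₀ P₁ : Measure Ω)
    [IsProbabilityMeasure P₀] [IsProbabilityMeasure P₁]
    {M : Type*} [PseudoMetricSpace M] [MeasurableSpace M] [BorelSpace M]
    (θ₀ θ₁ : M) (Δ : ℝ) (hΔ : Δ = dist θ₀ θ₁)
    (n : ℕ)
    (θhat : (Fin n → Ω) → M) (hθ : Measurable θhat) :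
    ENNReal.ofReal (Δ / 8 *
        (if klDiv P₀ P₁ = ⊤ then 0 else Real.exp (-(n : ℝ) * (klDiv P₀ P₁).toReal)))
      ≤ max (∫⁻ ω, ENNReal.ofReal (dist (θhat ω) θ₀) ∂(Measure.pi fun _ : Fin n => P₀))
            (∫⁻ ω, ENNReal.ofReal (dist (θhat ω) θ₁) ∂(Measure.pi fun _ : Fin n => P₁)) := by
  by_cases htop : klDiv P₀ P₁ = ⊤
  · simp [htop]
  have hkl := klDiv_ne_top_iff.1 htop
  obtain ⟨A, hA, hreduce⟩ := exists_ofReal_dist_div_four_mul_le_max_lintegral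
    (Measure.pi fun _ : Fin n => P₀) (Measure.pi fun _ : Fin n => P₁) hθ θ₀ θ₁
  have htest := ofReal_exp_neg_card_mul_integral_log_rnDeriv_le hkl.1 hkl.2 hA
  rw [Fintype.card_fin] at htest
  rw [if_neg htop, toReal_klDiv hkl, hΔ]
  calc _ = ENNReal.ofReal (dist θ₀ θ₁ / 4) *
        (ENNReal.ofReal (exp (-n * ∫ x, log (P₀.rnDeriv P₁ x).toReal ∂P₀)) / 2) := by
        rw [← ENNReal.ofReal_ofNat 2, ← ENNReal.ofReal_div_of_pos two_pos,
          ← ENNReal.ofReal_mul (by positivity)]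
        ring_nf
    _ ≤ ENNReal.ofReal (dist θ₀ θ₁ / 4) * ((Measure.pi fun _ : Fin n => P₀) A +
        (Measure.pi fun _ : Fin n => P₁) Aᶜ) := by
        gcongr
        exact ENNReal.div_le_of_le_mul' htest
    _ ≤ _ := hreduce

/-- Le Cam's two-point method. -/
theorem le_cam_two_point
    {Ω : Type*} [MeasurableSpace Ω] (P₀ P₁ : Measure Ω)
    [IsProbabilityMeasure P₀] [IsProbabilityMeasure P₁]
    {M : Type*} [PseudoMetricSpace M] [MeasurableSpace M] [BorelSpace M]
    (θ₀ θ₁ : M) (Δ : ℝ) (hΔ : Δ = dist θ₀ θ₁)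
    (n : ℕ) (hn : 1 ≤ n)
    (θhat : (Fin n → Ω) → M) (hθ : Measurable θhat) :
    ENNReal.ofReal (Δ / 8 *
        (if klDiv P₀ P₁ = ⊤ then 0 else Real.exp (-(n : ℝ) * (klDiv P₀ P₁).toReal)))
      ≤ max (∫⁻ ω, ENNReal.ofReal (dist (θhat ω) θ₀) ∂(Measure.pi fun _ : Fin n => P₀))
            (∫⁻ ω, ENNReal.ofReal (dist (θhat ω) θ₁) ∂(Measure.pi fun _ : Fin n => P₁)) :=
  le_cam_two_point_general P₀ P₁ θ₀ θ₁ Δ hΔ n θhat hθ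
end

section
/- (Discretization/partition lemma.) Let Z be a measurable subset of ℝ^d, μ a probability measure on Z, and Rmax, ρ : Z → [0,∞) measurable. Given γ ∈ [0,1], define ξ_γ(z) = 1(μ({z}) ≤ γ). Then for any δ ∈ (0,1] there exist a countable index set I, pairwise disjoint measurable sets B_i ⊆ Z with ⋃_{i∈I} B_i = Z, and nonnegative reals R_i, ρ_i and ξ_i ∈ {0,1} for each i ∈ I, such that: (1) for all z ∈ B_i, Rmax(z)² ∈ [R_i², (1+δ)·R_i²], ρ(z)² ∈ [ρ_i², (1+δ)·ρ_i²], and ξ_γ(z) = ξ_i; (2) each B_i either satisfies μ(B_i) ≤ δ or is a singleton {z}. -/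
/-!
Points of mass at least `δ` are countably many and become singleton cells. Every other point
has, by outer regularity, an open neighbourhood of mass at most `δ`, hence a basic one; these
countably many basic open sets and the heavy singletons cover `Z`, and sending each point to the
first covering set that contains it is a measurable partition into cells of mass at most `δ` or
singletons. Refining it by the geometric shells `(1 + δ) ^ k ≤ x ^ 2 < (1 + δ) ^ (k + 1)` of
`Rmax` and `ρ`, and by the set `{z | μ {z} ≤ γ}` (measurable because its complement consists of
atoms, hence is countable), gives the required cells.
-/

open MeasureTheory
open scoped ENNReal Classical

namespace Real

theorem zpow_floor_logb_le_self {b y : ℝ} (hb : 1 < b) (hy : 0 < y) :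
    b ^ ⌊logb b y⌋ ≤ y := by
  calc b ^ ⌊logb b y⌋ = b ^ (⌊logb b y⌋ : ℝ) := (rpow_intCast b _).symm
    _ ≤ b ^ logb b y := rpow_le_rpow_of_exponent_le hb.le (Int.floor_le _)
    _ = y := rpow_logb (by linarith) hb.ne' hy

theorem lt_zpow_floor_logb_add_one {b y : ℝ} (hb : 1 < b) (hy : 0 < y) :
    y < b ^ (⌊logb b y⌋ + 1) := by
  calc y = b ^ logb b y := (rpow_logb (by linarith) hb.ne' hy).symm
    _ < b ^ ((⌊logb b y⌋ + 1 : ℤ) : ℝ) := by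
      apply rpow_lt_rpow_of_exponent_lt hb
      push_cast
      exact Int.lt_floor_add_one _
    _ = b ^ (⌊logb b y⌋ + 1) := rpow_intCast b _

end Real

noncomputable section

-- `x = 0` lies in no shell `b ^ k ≤ x ^ 2 < b ^ (k + 1)`, so it gets the extra index `none`.
def shellIndex (b x : ℝ) : Option ℤ :=
  if x = 0 then none else some ⌊Real.logb b (x ^ 2)⌋

def shellRadius (b : ℝ) (i : Option ℤ) : ℝ :=
  i.elim 0 fun k => √(b ^ k)

theorem shellRadius_nonneg (b : ℝ) (i : Option ℤ) : 0 ≤ shellRadius b i := by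
  cases i <;> simp [shellRadius, Real.sqrt_nonneg]

theorem shellRadius_shellIndex_sq_bounds {b : ℝ} (hb : 1 < b) (x : ℝ) :
    shellRadius b (shellIndex b x) ^ 2 ≤ x ^ 2 ∧
      x ^ 2 ≤ b * shellRadius b (shellIndex b x) ^ 2 := by
  by_cases hx : x = 0
  · simp [shellIndex, shellRadius, hx]
  have hx2 : 0 < x ^ 2 := by positivity
  have hpow : 0 < b ^ ⌊Real.logb b (x ^ 2)⌋ := zpow_pos (by linarith) _
  simp only [shellIndex, shellRadius, hx, if_false, Option.elim, Real.sq_sqrt hpow.le]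
  refine ⟨Real.zpow_floor_logb_le_self hb hx2, ?_⟩
  have := Real.lt_zpow_floor_logb_add_one hb hx2
  rw [zpow_add_one₀ (by linarith)] at this
  linarith

theorem measurableSet_shellIndex_preimage (b : ℝ) (i : Option ℤ) :
    MeasurableSet (shellIndex b ⁻¹' {i}) := by
  have hfloor : Measurable fun x : ℝ => ⌊Real.logb b (x ^ 2)⌋ := by
    unfold Real.logb; fun_prop
  cases i with
  | none =>
    convert measurableSet_singleton (0 : ℝ)
    ext x; by_cases hx : x = 0 <;> simp [shellIndex, hx]
  | some k =>
    convert (measurableSet_singleton (0 : ℝ)).compl.inter (hfloor (measurableSet_singleton k))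
    ext x; by_cases hx : x = 0 <;> simp [shellIndex, hx]

theorem measurableSet_preimage_prodMk_singleton {α β γ : Type*} [MeasurableSpace α]
    {f : α → β} {g : α → γ} (hf : ∀ b, MeasurableSet (f ⁻¹' {b}))
    (hg : ∀ c, MeasurableSet (g ⁻¹' {c})) (p : β × γ) :
    MeasurableSet ((fun a => (f a, g a)) ⁻¹' {p}) := by
  convert (hf p.1).inter (hg p.2)
  ext a; simp [Prod.ext_iff]

namespace MeasureTheory.Measure

variable {α : Type*} [MeasurableSpace α] [MeasurableSingletonClass α]
  (μ : Measure α) [SFinite μ]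

theorem countable_setOf_measure_singleton_pos : {a : α | 0 < μ {a}}.Countable := by
  simpa only [id, Set.ofPred_eq_eq_singleton] using countable_meas_level_set_pos (μ := μ) measurable_id

theorem measurableSet_setOf_measure_singleton_le (t : ℝ≥0∞) :
    MeasurableSet {a : α | μ {a} ≤ t} := by
  refine MeasurableSet.of_compl (Set.Countable.measurableSet ?_)
  refine (countable_setOf_measure_singleton_pos μ).mono fun a ha => ?_
  simp only [Set.mem_compl_iff, Set.mem_ofPred_eq, not_le] at ha ⊢
  exact pos_of_gt ha

variable [TopologicalSpace α] [SecondCountableTopology α] [OpensMeasurableSpace α]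
  [μ.OuterRegular]

theorem exists_countable_sUnion_eq_univ_measure_le_or_subsingleton {ε : ℝ≥0∞} (hε : 0 < ε) :
    ∃ 𝒰 : Set (Set α), 𝒰.Countable ∧ ⋃₀ 𝒰 = Set.univ ∧
      ∀ U ∈ 𝒰, MeasurableSet U ∧ (μ U ≤ ε ∨ U.Subsingleton) := by
  set ℬ := TopologicalSpace.countableBasis α
  refine ⟨{U ∈ ℬ | μ U ≤ ε} ∪ (fun a => {a}) '' {a | ε ≤ μ {a}}, ?_, ?_, ?_⟩
  · refine ((TopologicalSpace.countable_countableBasis α).mono (Set.sep_subset _ _)).union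
      (((countable_setOf_measure_singleton_pos μ).mono fun a ha => hε.trans_le ha).image _)
  · refine Set.eq_univ_of_forall fun a => ?_
    rcases lt_or_ge (μ {a}) ε with ha | ha
    · obtain ⟨U, haU, hU, hμU⟩ := Set.exists_isOpen_lt_of_lt {a} ε ha
      obtain ⟨V, hVℬ, haV, hVU⟩ := (TopologicalSpace.isBasis_countableBasis α).exists_subset_of_mem_open
        (haU rfl) hU
      exact ⟨V, Or.inl ⟨hVℬ, (measure_mono hVU).trans hμU.le⟩, haV⟩
    · exact ⟨{a}, Or.inr ⟨a, ha, rfl⟩, rfl⟩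
  · rintro U (⟨hUℬ, hμU⟩ | ⟨a, -, rfl⟩)
    · exact ⟨(TopologicalSpace.isOpen_of_mem_countableBasis hUℬ).measurableSet, Or.inl hμU⟩
    · exact ⟨measurableSet_singleton a, Or.inr Set.subsingleton_singleton⟩

theorem exists_measurable_nat_measure_fiber_le_or_subsingleton {ε : ℝ≥0∞} (hε : 0 < ε) :
    ∃ c : α → ℕ, Measurable c ∧ ∀ n, μ (c ⁻¹' {n}) ≤ ε ∨ (c ⁻¹' {n}).Subsingleton := by
  obtain ⟨𝒰, h𝒰, hcover, hgood⟩ :=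
    exists_countable_sUnion_eq_univ_measure_le_or_subsingleton μ hε
  obtain ⟨U, hU⟩ := (h𝒰.insert ∅).exists_eq_range (Set.insert_nonempty _ _)
  have hgood' : ∀ n, MeasurableSet (U n) ∧ (μ (U n) ≤ ε ∨ (U n).Subsingleton) := by
    intro n
    rcases (hU ▸ Set.mem_range_self n : U n ∈ insert ∅ 𝒰) with h | h
    · simp [h]
    · exact hgood _ h
  have hmem : ∀ a, ∃ n, a ∈ U n := fun a => by
    obtain ⟨V, hV, haV⟩ := Set.mem_sUnion.1 (hcover.symm ▸ Set.mem_univ a)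
    obtain ⟨n, rfl⟩ := (hU ▸ Set.mem_insert_of_mem ∅ hV : V ∈ Set.range U)
    exact ⟨n, haV⟩
  refine ⟨fun a => Nat.find (hmem a), measurable_find hmem fun n => (hgood' n).1, fun n => ?_⟩
  have hsub : (fun a => Nat.find (hmem a)) ⁻¹' {n} ⊆ U n := by
    rintro a rfl
    exact Nat.find_spec (hmem a)
  exact (hgood' n).2.imp (measure_mono hsub).trans (·.anti hsub)

end MeasureTheory.Measure

theorem partition_lemma_general (d : ℕ) (Z : Set (Fin d → ℝ))
    (μ : Measure Z) [IsProbabilityMeasure μ]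
    (Rmax ρ : Z → ℝ) (hRm : Measurable Rmax) (hρm : Measurable ρ)
    (γ : ℝ) (δ : ℝ) (hδ : δ ∈ Set.Ioc (0 : ℝ) 1) :
    ∃ (I : Type) (_ : Countable I) (B : I → Set Z) (R ρi : I → ℝ) (ξ : I → Bool),
      Pairwise (Function.onFun Disjoint B) ∧
      (∀ i, MeasurableSet (B i)) ∧
      (⋃ i, B i) = Set.univ ∧
      (∀ i, 0 ≤ R i ∧ 0 ≤ ρi i) ∧
      (∀ i, ∀ z ∈ B i,
        (R i ^ 2 ≤ Rmax z ^ 2 ∧ Rmax z ^ 2 ≤ (1 + δ) * R i ^ 2) ∧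
        (ρi i ^ 2 ≤ ρ z ^ 2 ∧ ρ z ^ 2 ≤ (1 + δ) * ρi i ^ 2) ∧
        ((μ {z} ≤ ENNReal.ofReal γ) ↔ ξ i = true)) ∧
      (∀ i, μ (B i) ≤ ENNReal.ofReal δ ∨ ∃ z, B i = {z}) := by
  have hb : 1 < 1 + δ := by linarith [hδ.1]
  obtain ⟨c, hc, hcell⟩ := μ.exists_measurable_nat_measure_fiber_le_or_subsingleton
    (ENNReal.ofReal_pos.2 hδ.1)
  have hξ : Measurable fun z => decide (μ {z} ≤ ENNReal.ofReal γ) :=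
    measurable_to_bool <| by
      simpa only [Set.preimage, Set.mem_singleton_iff, decide_eq_true_eq] using
        μ.measurableSet_setOf_measure_singleton_le _
  let idx z := (c z, shellIndex (1 + δ) (Rmax z), shellIndex (1 + δ) (ρ z),
    decide (μ {z} ≤ ENNReal.ofReal γ))
  refine ⟨ℕ × Option ℤ × Option ℤ × Bool, inferInstance, fun i => idx ⁻¹' {i},
    fun i => shellRadius (1 + δ) i.2.1, fun i => shellRadius (1 + δ) i.2.2.1, fun i => i.2.2.2,
    pairwise_disjoint_fiber idx, ?_, Set.eq_univ_of_forall fun z => Set.mem_iUnion.2 ⟨idx z, rfl⟩,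
    fun i => ⟨shellRadius_nonneg _ _, shellRadius_nonneg _ _⟩, ?_, fun i => ?_⟩
  · exact measurableSet_preimage_prodMk_singleton (fun n => hc (measurableSet_singleton n))
      (measurableSet_preimage_prodMk_singleton
        (fun i => hRm (measurableSet_shellIndex_preimage _ i))
        (measurableSet_preimage_prodMk_singleton
          (fun i => hρm (measurableSet_shellIndex_preimage _ i))
          (fun b => hξ (measurableSet_singleton b))))
  · rintro i z rfl
    exact ⟨shellRadius_shellIndex_sq_bounds hb _, shellRadius_shellIndex_sq_bounds hb _,
      decide_eq_true_iff.symm⟩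
  · have hsub : idx ⁻¹' {i} ⊆ c ⁻¹' {i.1} := by
      rintro z rfl
      rfl
    rcases hcell i.1 with hsmall | hsing
    · exact Or.inl ((measure_mono hsub).trans hsmall)
    · rcases (hsing.anti hsub).eq_empty_or_singleton with hempty | hsingleton
      · simp [hempty]
      · exact Or.inr hsingleton

/-- Lemma 1: discretization/partition lemma. -/
theorem partition_lemma (d : ℕ) (Z : Set (Fin d → ℝ)) (hZ : MeasurableSet Z)
    (μ : Measure Z) [IsProbabilityMeasure μ]
    (Rmax ρ : Z → ℝ) (hRm : Measurable Rmax) (hρm : Measurable ρ)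
    (hRnn : ∀ z, 0 ≤ Rmax z) (hρnn : ∀ z, 0 ≤ ρ z)
    (γ : ℝ) (hγ : γ ∈ Set.Icc (0 : ℝ) 1) (δ : ℝ) (hδ : δ ∈ Set.Ioc (0 : ℝ) 1) :
    ∃ (I : Type) (_ : Countable I) (B : I → Set Z) (R ρi : I → ℝ) (ξ : I → Bool),
      Pairwise (Function.onFun Disjoint B) ∧
      (∀ i, MeasurableSet (B i)) ∧
      (⋃ i, B i) = Set.univ ∧
      (∀ i, 0 ≤ R i ∧ 0 ≤ ρi i) ∧
      (∀ i, ∀ z ∈ B i,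
        (R i ^ 2 ≤ Rmax z ^ 2 ∧ Rmax z ^ 2 ≤ (1 + δ) * R i ^ 2) ∧
        (ρi i ^ 2 ≤ ρ z ^ 2 ∧ ρ z ^ 2 ≤ (1 + δ) * ρi i ^ 2) ∧
        ((μ {z} ≤ ENNReal.ofReal γ) ↔ ξ i = true)) ∧
      (∀ i, μ (B i) ≤ ENNReal.ofReal δ ∨ ∃ z, B i = {z}) :=
  partition_lemma_general d Z μ Rmax ρ hRm hρm γ δ hδ
end
end

section
/- (Hölder–Markov–Cauchy–Schwarz tail-moment bound.) Let ρ, σ, Rmax be nonnegative measurable functions on a probability space with Rmax > 0 wherever σ > 0, 0 < E[(ρσ)²], and E[(ρσ)^{2+ε}] < ∞ for some ε > 0. Set C = 2^{2+ε} · E[(ρσ)^{2+ε}]² / E[(ρσ)²]^{2+ε} and assume n ≥ 2·C^{2/ε}·E[σ²/Rmax²]. Then E[ ρ²σ² · 1( ρσ² > Rmax·√( n·E[ρ²σ²]/2 ) ) ] ≤ (1/2)·E[ρ²σ²]. -/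
open MeasureTheory Real
open scoped ENNReal Classical

/-!
Write `X = ρσ`, `A` for the tail event and `t = √(n E[X²] / 2)`. Hölder's inequality with
exponents `(2 + ε)/2` and `(2 + ε)/ε` bounds `E[X² 1_A]` by `E[X^(2+ε)]^(2/(2+ε)) μ(A)^(ε/(2+ε))`.
On `A` we have `t < X · σ/Rmax`, so Markov's inequality followed by Cauchy–Schwarz gives
`t μ(A) ≤ √(E[X²] E[σ²/Rmax²])`, which the lower bound on `n` turns into `μ(A) ≤ C^(-1/ε)`.
The constant `C` is exactly the one for which the Hölder bound then equals `E[X²] / 2`.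
-/

section

variable {α : Type*} [MeasurableSpace α] {μ : Measure α}

theorem memLp_ofReal_of_integrable_rpow {f : α → ℝ} {p : ℝ} (hp : 0 < p)
    (hf0 : 0 ≤ᵐ[μ] f) (hfm : AEStronglyMeasurable f μ)
    (hint : Integrable (fun x => f x ^ p) μ) : MemLp f (ENNReal.ofReal p) μ := by
  refine (integrable_norm_rpow_iff hfm (by simpa using hp) ENNReal.ofReal_ne_top).1 ?_
  refine hint.congr ?_
  filter_upwards [hf0] with x hx
  rw [ENNReal.toReal_ofReal hp.le, Real.norm_of_nonneg hx]

theorem setIntegral_le_rpow_integral_mul_measureReal [IsFiniteMeasure μ] {p q : ℝ}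
    (hpq : p.HolderConjugate q) {f : α → ℝ} (hf0 : 0 ≤ᵐ[μ] f)
    (hf : MemLp f (ENNReal.ofReal p) μ) {s : Set α} (hs : MeasurableSet s) :
    ∫ x in s, f x ∂μ ≤ (∫ x, f x ^ p ∂μ) ^ (1 / p) * μ.real s ^ (1 / q) := by
  have hholder := integral_mul_le_Lp_mul_Lq_of_nonneg hpq hf0
    (ae_of_all _ (s.indicator_nonneg fun _ _ => zero_le_one))
    hf (memLp_indicator_const _ hs (1 : ℝ) (Or.inr (measure_ne_top μ s)))
  have hind : ∀ x, s.indicator (fun _ => (1 : ℝ)) x ^ q = s.indicator 1 x := fun x => by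
    by_cases hx : x ∈ s <;> simp [hx, Real.zero_rpow hpq.symm.pos.ne']
  simp only [hind, mul_comm (f _), ← Set.indicator_mul_left, one_mul] at hholder
  rwa [integral_indicator hs, integral_indicator_one hs] at hholder

theorem setIntegral_sq_le_of_integrable_rpow [IsFiniteMeasure μ] {f : α → ℝ} {r : ℝ}
    (hr : 2 < r) (hf0 : 0 ≤ᵐ[μ] f) (hfm : AEStronglyMeasurable f μ)
    (hint : Integrable (fun x => f x ^ r) μ) {s : Set α} (hs : MeasurableSet s) :
    ∫ x in s, f x ^ 2 ∂μ ≤ (∫ x, f x ^ r ∂μ) ^ (2 / r) * μ.real s ^ ((r - 2) / r) := by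
  have hsq_rpow : (fun x => (f x ^ 2) ^ (r / 2)) =ᵐ[μ] fun x => f x ^ r := by
    filter_upwards [hf0] with x hx
    rw [← Real.rpow_natCast, ← Real.rpow_mul hx]
    ring_nf
  have hpq : (r / 2).HolderConjugate (r / (r - 2)) := by
    rw [Real.holderConjugate_iff]
    refine ⟨by linarith, ?_⟩
    field_simp
    ring
  have hf2 : MemLp (fun x => f x ^ 2) (ENNReal.ofReal (r / 2)) μ :=
    memLp_ofReal_of_integrable_rpow (by linarith) (hf0.mono fun x _ => sq_nonneg _) (hfm.pow 2)
      (hint.congr hsq_rpow.symm)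
  have hholder := setIntegral_le_rpow_integral_mul_measureReal hpq
    (hf0.mono fun x _ => sq_nonneg _) hf2 hs
  rwa [integral_congr_ae hsq_rpow, one_div_div, one_div_div] at hholder

theorem mul_measureReal_le_sqrt_mul_sqrt {f g : α → ℝ} (hf0 : 0 ≤ᵐ[μ] f) (hg0 : 0 ≤ᵐ[μ] g)
    (hf : MemLp f 2 μ) (hg : MemLp g 2 μ) (t : ℝ) :
    t * μ.real {x | t ≤ f x * g x} ≤ √(∫ x, f x ^ 2 ∂μ) * √(∫ x, g x ^ 2 ∂μ) := by
  have hfg0 : 0 ≤ᵐ[μ] fun x => f x * g x := by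
    filter_upwards [hf0, hg0] with x hfx hgx
    exact mul_nonneg hfx hgx
  have hcs := integral_mul_le_Lp_mul_Lq_of_nonneg .two_two hf0 hg0 (by simpa using hf)
    (by simpa using hg)
  simp only [Real.rpow_two, ← Real.sqrt_eq_rpow] at hcs
  calc t * μ.real {x | t ≤ f x * g x} ≤ ∫ x, f x * g x ∂μ :=
        mul_meas_ge_le_integral_of_nonneg hfg0 (hf.integrable_mul hg) t
    _ ≤ _ := hcs

theorem integral_sq_div_sq_pos {ρ σ R : α → ℝ} (hσ0 : ∀ x, 0 ≤ σ x)
    (hRσ : ∀ x, 0 < σ x → 0 < R x) (hρσ : Integrable (fun x => (ρ x * σ x) ^ 2) μ)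
    (hσR : Integrable (fun x => σ x ^ 2 / R x ^ 2) μ) (hpos : 0 < ∫ x, (ρ x * σ x) ^ 2 ∂μ) :
    0 < ∫ x, σ x ^ 2 / R x ^ 2 ∂μ := by
  refine (integral_pos_iff_support_of_nonneg (fun x => by positivity) hσR).2
    (((integral_pos_iff_support_of_nonneg (fun x => sq_nonneg _) hρσ).1 hpos).trans_le
      (measure_mono fun x hx => ?_))
  have hσ : 0 < σ x := (hσ0 x).lt_of_ne' fun h => hx (by simp [h])
  have := hRσ x hσ
  exact (by positivity : 0 < σ x ^ 2 / R x ^ 2).ne'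

theorem mul_measureReal_tail_le [IsFiniteMeasure μ] {ρ σ R : α → ℝ} (hσm : Measurable σ)
    (hRm : Measurable R) (hρ0 : ∀ x, 0 ≤ ρ x) (hσ0 : ∀ x, 0 ≤ σ x) (hR0 : ∀ x, 0 ≤ R x)
    (hRσ : ∀ x, 0 < σ x → 0 < R x) (hρσ : MemLp (fun x => ρ x * σ x) 2 μ)
    (hσR : Integrable (fun x => σ x ^ 2 / R x ^ 2) μ) {t : ℝ} (ht : 0 ≤ t) :
    t * μ.real {x | R x * t < ρ x * σ x ^ 2}
      ≤ √(∫ x, (ρ x * σ x) ^ 2 ∂μ) * √(∫ x, σ x ^ 2 / R x ^ 2 ∂μ) := by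
  have hσR2 : MemLp (fun x => σ x / R x) 2 μ :=
    (memLp_two_iff_integrable_sq (hσm.div hRm).aestronglyMeasurable).2
      (by simpa only [Pi.div_apply, div_pow] using hσR)
  have hsub : {x | R x * t < ρ x * σ x ^ 2} ⊆ {x | t ≤ ρ x * σ x * (σ x / R x)} := by
    intro x hx
    have hσ : 0 < σ x := (hσ0 x).lt_of_ne' fun h => by
      simp only [Set.mem_ofPred_eq, h] at hx
      nlinarith [mul_nonneg (hR0 x) ht]
    have hprod : ρ x * σ x * (σ x / R x) = ρ x * σ x ^ 2 / R x := by field_simp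
    rw [Set.mem_ofPred_eq, hprod, le_div_iff₀ (hRσ x hσ), mul_comm]
    exact hx.le
  have hcs := mul_measureReal_le_sqrt_mul_sqrt (ae_of_all _ fun x => mul_nonneg (hρ0 x) (hσ0 x))
    (ae_of_all _ fun x => div_nonneg (hσ0 x) (hR0 x)) hρσ hσR2 t
  simp only [div_pow] at hcs
  exact (mul_le_mul_of_nonneg_left (measureReal_mono hsub) ht).trans hcs

end

theorem mul_rpow_le_one_of_sqrt_mul_le {M S C ε a n : ℝ} (hM : 0 < M) (hS : 0 < S) (hC : 0 ≤ C)
    (ha : 0 ≤ a) (hn : 2 * C ^ (2 / ε) * S ≤ n) (h : √(n * M / 2) * a ≤ √M * √S) :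
    a * C ^ (1 / ε) ≤ 1 := by
  have hc : C ^ (2 / ε) = (C ^ (1 / ε)) ^ 2 := by
    rw [← Real.rpow_natCast, ← Real.rpow_mul hC]
    ring_nf
  have hsqrt : C ^ (1 / ε) * (√M * √S) ≤ √(n * M / 2) :=
    calc C ^ (1 / ε) * (√M * √S) = √((C ^ (1 / ε)) ^ 2 * (M * S)) := by
          rw [Real.sqrt_mul (sq_nonneg _), Real.sqrt_sq (by positivity), Real.sqrt_mul hM.le]
      _ ≤ √(n * M / 2) := Real.sqrt_le_sqrt (by rw [← hc]; nlinarith)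
  have hMS : 0 < √M * √S := by positivity
  nlinarith [mul_le_mul_of_nonneg_right hsqrt ha]

theorem rpow_mul_rpow_le_half_of_mul_rpow_le_one {K M ε a C : ℝ} (hK : 0 ≤ K) (hM : 0 < M)
    (hε : 0 < ε) (ha : 0 ≤ a) (hC : C = 2 ^ (2 + ε) * K ^ 2 / M ^ (2 + ε))
    (h : a * C ^ (1 / ε) ≤ 1) :
    K ^ (2 / (2 + ε)) * a ^ (ε / (2 + ε)) ≤ 1 / 2 * M := by
  have h2ε : 0 < 2 + ε := by linarith
  rcases hK.eq_or_lt with rfl | hK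
  · rw [Real.zero_rpow (by positivity), zero_mul]
    positivity
  have hC0 : 0 < C := by rw [hC]; positivity
  have haC : a ^ ε * C ≤ 1 := by
    have := Real.rpow_le_one (by positivity) h hε.le
    rwa [Real.mul_rpow ha (by positivity), ← Real.rpow_mul hC0.le, one_div_mul_cancel hε.ne',
      Real.rpow_one] at this
  have hKa : K ^ 2 * a ^ ε ≤ (1 / 2 * M) ^ (2 + ε) := by
    calc K ^ 2 * a ^ ε ≤ K ^ 2 / C := by
          rw [le_div_iff₀ hC0, mul_assoc]
          exact mul_le_of_le_one_right (by positivity) haC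
      _ = (1 / 2 * M) ^ (2 + ε) := by
          rw [hC, Real.mul_rpow (by norm_num) hM.le, Real.div_rpow zero_le_one zero_le_two,
            Real.one_rpow]
          field_simp
  have hlhs : (K ^ (2 / (2 + ε)) * a ^ (ε / (2 + ε))) ^ (2 + ε) = K ^ 2 * a ^ ε := by
    rw [Real.mul_rpow (by positivity) (by positivity), ← Real.rpow_mul hK.le, ← Real.rpow_mul ha,
      div_mul_cancel₀ _ h2ε.ne', div_mul_cancel₀ _ h2ε.ne', Real.rpow_two]
  rwa [← hlhs, Real.rpow_le_rpow_iff (by positivity) (by positivity) h2ε] at hKa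

/-- Hölder–Markov–Cauchy–Schwarz tail-moment bound. -/
theorem tail_moment_bound_sigma
    {Ω : Type*} [MeasurableSpace Ω] (μ : Measure Ω) [IsProbabilityMeasure μ]
    (ρ σ Rmax : Ω → ℝ) (hρm : Measurable ρ) (hσm : Measurable σ) (hRm : Measurable Rmax)
    (hρnn : ∀ ω, 0 ≤ ρ ω) (hσnn : ∀ ω, 0 ≤ σ ω) (hRnn : ∀ ω, 0 ≤ Rmax ω)
    (hRσ : ∀ ω, 0 < σ ω → 0 < Rmax ω)
    (ε : ℝ) (hε : 0 < ε)
    (hpos : 0 < ∫ ω, (ρ ω * σ ω) ^ 2 ∂μ)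
    (hmom : Integrable (fun ω => (ρ ω * σ ω) ^ (2 + ε)) μ)
    (hrat : Integrable (fun ω => σ ω ^ 2 / Rmax ω ^ 2) μ)
    (C : ℝ)
    (hC : C = 2 ^ (2 + ε) * (∫ ω, (ρ ω * σ ω) ^ (2 + ε) ∂μ) ^ 2
      / (∫ ω, (ρ ω * σ ω) ^ 2 ∂μ) ^ (2 + ε))
    (n : ℕ)
    (hn : 2 * C ^ (2 / ε) * (∫ ω, σ ω ^ 2 / Rmax ω ^ 2 ∂μ) ≤ (n : ℝ)) :
    (∫ ω, (if Rmax ω * Real.sqrt ((n : ℝ) * (∫ ω', (ρ ω' * σ ω') ^ 2 ∂μ) / 2)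
          < ρ ω * σ ω ^ 2
        then ρ ω ^ 2 * σ ω ^ 2 else 0) ∂μ)
      ≤ (1 / 2) * ∫ ω, (ρ ω * σ ω) ^ 2 ∂μ := by
  set t := √((n : ℝ) * (∫ ω, (ρ ω * σ ω) ^ 2 ∂μ) / 2)
  set A := {ω | Rmax ω * t < ρ ω * σ ω ^ 2}
  have hX0 : ∀ ω, 0 ≤ ρ ω * σ ω := fun ω => mul_nonneg (hρnn ω) (hσnn ω)
  have hXm : AEStronglyMeasurable (fun ω => ρ ω * σ ω) μ := (hρm.mul hσm).aestronglyMeasurable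
  have hX : MemLp (fun ω => ρ ω * σ ω) 2 μ :=
    (memLp_ofReal_of_integrable_rpow (by positivity) (ae_of_all _ hX0) hXm hmom).mono_exponent
      (by rw [← ENNReal.ofReal_ofNat]; exact ENNReal.ofReal_le_ofReal (by linarith))
  have hA : MeasurableSet A := measurableSet_lt (hRm.mul_const t) (hρm.mul (hσm.pow_const 2))
  have hμA : μ.real A * C ^ (1 / ε) ≤ 1 :=
    mul_rpow_le_one_of_sqrt_mul_le hpos
      (integral_sq_div_sq_pos hσnn hRσ hX.integrable_sq hrat hpos) (by rw [hC]; positivity)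
      measureReal_nonneg hn
      (mul_measureReal_tail_le hσm hRm hρnn hσnn hRnn hRσ hX hrat (Real.sqrt_nonneg _))
  calc _ = ∫ ω in A, (ρ ω * σ ω) ^ 2 ∂μ := by
        rw [← integral_indicator hA]
        congr 1
        funext ω
        simp only [Set.indicator_apply, A, Set.mem_ofPred_eq, mul_pow]
    _ ≤ (∫ ω, (ρ ω * σ ω) ^ (2 + ε) ∂μ) ^ (2 / (2 + ε)) * μ.real A ^ (ε / (2 + ε)) := by
        simpa only [add_sub_cancel_left] using
          setIntegral_sq_le_of_integrable_rpow (by linarith) (ae_of_all _ hX0) hXm hmom hA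
    _ ≤ 1 / 2 * ∫ ω, (ρ ω * σ ω) ^ 2 ∂μ :=
        rpow_mul_rpow_le_half_of_mul_rpow_le_one
          (integral_nonneg fun ω => Real.rpow_nonneg (hX0 ω) _) hpos hε measureReal_nonneg hC hμA
end

section
/- (Feasible perturbation for the noise-based lower bound.) Let ρ, σ, Rmax be nonnegative measurable functions on a probability space with 0 < E[ρ²σ²] < ∞, let n ≥ 1, set α = √( 2·E[ρ²σ²]/n ) and Δ = min{ α·σ²·ρ / E[ρ²σ²], Rmax } (pointwise). Then: (1) 0 ≤ Δ ≤ Rmax pointwise; (2) E[ Δ²/(2σ²) ] ≤ 1/n (with the convention 0/0 = 0 when σ = 0); (3) E[ρ·Δ] ≥ α·( 1 − E[ ρ²σ² · 1( ρσ² > Rmax·E[ρ²σ²]/α ) ] / E[ρ²σ²] ). -/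
open MeasureTheory Real
open scoped ENNReal Classical

/-! With `κ = α / V`, the perturbation is `Δ = min (κ ρ σ²) Rmax ≤ κ ρ σ²`, so
`Δ² / (2σ²) ≤ κ² ρ² σ² / 2`, whose expectation `α² / (2V)` is exactly `1 / n` by the choice of `α`.
Off the event where the cap `Rmax` is active, `ρ Δ = κ ρ² σ²`; on it, `ρ Δ ≥ 0`, so only the
mass of `ρ² σ²` on that event is lost. -/

lemma sq_div_two_mul_le_of_le_mul {d c s : ℝ} (hd : 0 ≤ d) (hdc : d ≤ c * s) (hs : 0 ≤ s) :
    d ^ 2 / (2 * s) ≤ c ^ 2 * s / 2 := by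
  rcases hs.eq_or_lt with rfl | hs
  · simp
  calc d ^ 2 / (2 * s) ≤ (c * s) ^ 2 / (2 * s) := by gcongr
    _ = c ^ 2 * s / 2 := by field_simp

lemma mul_sub_ite_le_mul_min {κ ρ u R : ℝ} (hκ : 0 < κ) (hρ : 0 ≤ ρ) (hu : 0 ≤ u)
    (hR : 0 ≤ R) :
    κ * (ρ * u - if R / κ < u then ρ * u else 0) ≤ ρ * min (κ * u) R := by
  split_ifs with h
  · simp only [sub_self, mul_zero]
    positivity
  · rw [min_eq_left ((le_div_iff₀' hκ).mp (not_lt.mp h))]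
    linarith

section

variable {Ω : Type*} [MeasurableSpace Ω] {μ : Measure Ω}

lemma integral_sq_div_two_mul_le {d c s : Ω → ℝ} (hd : ∀ ω, 0 ≤ d ω)
    (hdc : ∀ ω, d ω ≤ c ω * s ω) (hs : ∀ ω, 0 ≤ s ω)
    (hint : Integrable (fun ω => c ω ^ 2 * s ω) μ) :
    ∫ ω, d ω ^ 2 / (2 * s ω) ∂μ ≤ (∫ ω, c ω ^ 2 * s ω ∂μ) / 2 := by
  rw [← integral_div]
  exact integral_mono_of_nonneg (ae_of_all _ fun ω => div_nonneg (sq_nonneg _)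
    (mul_nonneg zero_le_two (hs ω))) (hint.div_const 2)
    (ae_of_all _ fun ω => sq_div_two_mul_le_of_le_mul (hd ω) (hdc ω) (hs ω))

lemma mul_sub_integral_ite_le_integral_mul_min {ρ u R : Ω → ℝ} {κ : ℝ}
    (hρm : Measurable ρ) (hum : Measurable u) (hRm : Measurable R)
    (hρ : ∀ ω, 0 ≤ ρ ω) (hu : ∀ ω, 0 ≤ u ω) (hR : ∀ ω, 0 ≤ R ω) (hκ : 0 < κ)
    (hint : Integrable (fun ω => ρ ω * u ω) μ) :
    κ * ((∫ ω, ρ ω * u ω ∂μ) - ∫ ω, (if R ω / κ < u ω then ρ ω * u ω else 0) ∂μ)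
      ≤ ∫ ω, ρ ω * min (κ * u ω) (R ω) ∂μ := by
  have hite : Integrable (fun ω => if R ω / κ < u ω then ρ ω * u ω else 0) μ :=
    hint.indicator (measurableSet_lt (hRm.div_const κ) hum)
  have hmin : Integrable (fun ω => ρ ω * min (κ * u ω) (R ω)) μ := by
    refine (hint.const_mul κ).mono'
      (hρm.mul ((hum.const_mul κ).min hRm)).aestronglyMeasurable (ae_of_all _ fun ω => ?_)
    rw [norm_of_nonneg (mul_nonneg (hρ ω) (le_min (mul_nonneg hκ.le (hu ω)) (hR ω)))]
    exact (mul_le_mul_of_nonneg_left (min_le_left _ _) (hρ ω)).trans_eq (by ring)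
  rw [← integral_sub hint hite, ← integral_const_mul]
  exact integral_mono (hint.sub hite |>.const_mul κ) hmin
    fun ω => mul_sub_ite_le_mul_min hκ (hρ ω) (hu ω) (hR ω)

end

theorem feasible_perturbation_noise_general
    {Ω : Type*} [MeasurableSpace Ω] (μ : Measure Ω) [IsProbabilityMeasure μ]
    (ρ σ Rmax : Ω → ℝ) (hρm : Measurable ρ) (hσm : Measurable σ) (hRm : Measurable Rmax)
    (hρnn : ∀ ω, 0 ≤ ρ ω) (hRnn : ∀ ω, 0 ≤ Rmax ω)
    (V : ℝ) (hV : V = ∫ ω, ρ ω ^ 2 * σ ω ^ 2 ∂μ) (hVpos : 0 < V)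
    (hVfin : Integrable (fun ω => ρ ω ^ 2 * σ ω ^ 2) μ)
    (n : ℕ) (hn : 1 ≤ n)
    (α : ℝ) (hα : α = Real.sqrt (2 * V / n))
    (Δ : Ω → ℝ) (hΔ : ∀ ω, Δ ω = min (α * σ ω ^ 2 * ρ ω / V) (Rmax ω)) :
    (∀ ω, 0 ≤ Δ ω ∧ Δ ω ≤ Rmax ω)
    ∧ (∫ ω, Δ ω ^ 2 / (2 * σ ω ^ 2) ∂μ) ≤ 1 / (n : ℝ)
    ∧ α * (1 - (∫ ω, (if Rmax ω * V / α < ρ ω * σ ω ^ 2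
          then ρ ω ^ 2 * σ ω ^ 2 else 0) ∂μ) / V)
        ≤ ∫ ω, ρ ω * Δ ω ∂μ := by
  have hn : (0 : ℝ) < n := by exact_mod_cast hn
  have hα2 : α ^ 2 = 2 * V / n := hα ▸ sq_sqrt (by positivity)
  have hκ : 0 < α / V := div_pos (hα ▸ sqrt_pos.mpr (by positivity)) hVpos
  have hΔ : ∀ ω, Δ ω = min (α / V * (ρ ω * σ ω ^ 2)) (Rmax ω) := fun ω => by
    rw [hΔ]; congr 1; ring
  have hρσ : ∀ ω, 0 ≤ ρ ω * σ ω ^ 2 := fun ω => mul_nonneg (hρnn ω) (sq_nonneg _)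
  have hΔnn : ∀ ω, 0 ≤ Δ ω := fun ω => hΔ ω ▸ le_min (mul_nonneg hκ.le (hρσ ω)) (hRnn ω)
  have hρρσ : ∀ ω, ρ ω * (ρ ω * σ ω ^ 2) = ρ ω ^ 2 * σ ω ^ 2 := fun ω => by ring
  refine ⟨fun ω => ⟨hΔnn ω, hΔ ω ▸ min_le_right _ _⟩, ?_, ?_⟩
  · calc ∫ ω, Δ ω ^ 2 / (2 * σ ω ^ 2) ∂μ
        ≤ (∫ ω, (α / V * ρ ω) ^ 2 * σ ω ^ 2 ∂μ) / 2 :=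
          integral_sq_div_two_mul_le hΔnn
            (fun ω => (hΔ ω).trans_le ((min_le_left _ _).trans_eq (mul_assoc _ _ _).symm))
            (fun ω => sq_nonneg _)
            (by simpa only [mul_pow, mul_assoc] using hVfin.const_mul ((α / V) ^ 2))
      _ = 1 / n := by
          simp only [mul_pow, mul_assoc, integral_const_mul, ← hV]
          field_simp; rw [hα2]; field_simp
  · have hlower := mul_sub_integral_ite_le_integral_mul_min (μ := μ)
      (u := fun ω => ρ ω * σ ω ^ 2) hρm (hρm.mul (hσm.pow_const 2)) hRm hρnn hρσ hRnn hκ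
      (by simpa only [hρρσ] using hVfin)
    simp only [hρρσ, ← hV, div_div_eq_mul_div, ← hΔ] at hlower
    have hrescale : ∀ I, α * (1 - I / V) = α / V * (V - I) := fun I => by field_simp
    rwa [hrescale]

/-- Feasible perturbation for the noise-based lower bound. -/
theorem feasible_perturbation_noise
    {Ω : Type*} [MeasurableSpace Ω] (μ : Measure Ω) [IsProbabilityMeasure μ]
    (ρ σ Rmax : Ω → ℝ) (hρm : Measurable ρ) (hσm : Measurable σ) (hRm : Measurable Rmax)
    (hρnn : ∀ ω, 0 ≤ ρ ω) (hσnn : ∀ ω, 0 ≤ σ ω) (hRnn : ∀ ω, 0 ≤ Rmax ω)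
    (V : ℝ) (hV : V = ∫ ω, ρ ω ^ 2 * σ ω ^ 2 ∂μ) (hVpos : 0 < V)
    (hVfin : Integrable (fun ω => ρ ω ^ 2 * σ ω ^ 2) μ)
    (n : ℕ) (hn : 1 ≤ n)
    (α : ℝ) (hα : α = Real.sqrt (2 * V / n))
    (Δ : Ω → ℝ) (hΔ : ∀ ω, Δ ω = min (α * σ ω ^ 2 * ρ ω / V) (Rmax ω)) :
    (∀ ω, 0 ≤ Δ ω ∧ Δ ω ≤ Rmax ω)
    ∧ (∫ ω, Δ ω ^ 2 / (2 * σ ω ^ 2) ∂μ) ≤ 1 / (n : ℝ)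
    ∧ α * (1 - (∫ ω, (if Rmax ω * V / α < ρ ω * σ ω ^ 2
          then ρ ω ^ 2 * σ ω ^ 2 else 0) ∂μ) / V)
        ≤ ∫ ω, ρ ω * Δ ω ∂μ :=
  feasible_perturbation_noise_general μ ρ σ Rmax hρm hσm hRm hρnn hRnn V hV hVpos hVfin n hn α hα Δ
    hΔ
end

section
/- (Feasible perturbation for the context-richness lower bound.) Let ρ, R be nonnegative measurable functions and ξ a {0,1}-valued measurable function on a probability space with 0 < E[ξ·ρ²·R²] < ∞, let n ≥ 1, set α = √( 4·E[ξ·ρ²·R²]/n ) and Δ = min{ ξ·ρ·R·α / E[ξ·ρ²·R²], 1/2 } (pointwise). Then: (1) 0 ≤ Δ ≤ 1/2 pointwise; (2) (1/4)·E[ξ·Δ²] ≤ 1/n; (3) E[ξ·ρ·Δ·R] ≥ α·( 1 − E[ ξ·ρ²·R² · 1( ξ·ρ·R > E[ξ·ρ²·R²]/(2α) ) ] / E[ξ·ρ²·R²] ). -/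
/-!
Since `ξ` is `{0,1}`-valued, everything is a statement about `Z = ξ ρ R`: then `ξ ρ² R² = Z²`,
`Δ = min (c Z) (1/2)` with `c = α / V`, and `ξ Δ² = Δ²`. Clipping only decreases `Δ`, so
`E[Δ²] ≤ c² E[Z²] = α² / V = 4 / n`. Off the tail `{Z > V / (2α)} = {c Z > 1/2}` the clipping
is inactive, so there `Z Δ = c Z²`, while on the tail `Z Δ ≥ 0`; integrating gives
`E[Z Δ] ≥ c (V - E[Z²; tail])`.
-/

open MeasureTheory

lemma min_sq_le_sq {x t : ℝ} (ht : 0 ≤ t) : min x t ^ 2 ≤ x ^ 2 := by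
  rcases le_total x t with hxt | htx
  · rw [min_eq_left hxt]
  · rw [min_eq_right htx]
    exact pow_le_pow_left₀ ht htx 2

lemma mul_sub_ite_le_mul_min_s18 {z c t : ℝ} (hz : 0 ≤ z) (hc : 0 ≤ c) (ht : 0 ≤ t) :
    c * (z ^ 2 - if t / c < z then z ^ 2 else 0) ≤ z * min (c * z) t := by
  split_ifs with hzt
  · rw [sub_self, mul_zero]
    exact mul_nonneg hz (le_min (mul_nonneg hc hz) ht)
  · have hcz : c * z ≤ t := by
      rcases hc.eq_or_lt with rfl | hc
      · simpa using ht
      · exact (le_div_iff₀' hc).1 (not_lt.1 hzt)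
    rw [min_eq_left hcz]
    exact le_of_eq (by ring)

section

variable {Ω : Type*} [MeasurableSpace Ω] {μ : Measure Ω} {Z : Ω → ℝ}

lemma integral_min_mul_sq_le (hZ2 : Integrable (fun ω => Z ω ^ 2) μ) (c : ℝ) {t : ℝ}
    (ht : 0 ≤ t) :
    ∫ ω, min (c * Z ω) t ^ 2 ∂μ ≤ c ^ 2 * ∫ ω, Z ω ^ 2 ∂μ := by
  rw [← integral_const_mul]
  refine integral_mono_of_nonneg (ae_of_all _ fun ω => sq_nonneg _) (hZ2.const_mul _)
    (ae_of_all _ fun ω => ?_)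
  simpa only [mul_pow] using min_sq_le_sq (x := c * Z ω) ht

lemma mul_sub_integral_tail_le_integral_mul_min (hZm : Measurable Z) (hZ : ∀ ω, 0 ≤ Z ω)
    (hZ2 : Integrable (fun ω => Z ω ^ 2) μ) {c t : ℝ} (hc : 0 ≤ c) (ht : 0 ≤ t) :
    c * (∫ ω, Z ω ^ 2 ∂μ - ∫ ω, (if t / c < Z ω then Z ω ^ 2 else 0) ∂μ)
      ≤ ∫ ω, Z ω * min (c * Z ω) t ∂μ := by
  have htail : Integrable (fun ω => if t / c < Z ω then Z ω ^ 2 else 0) μ :=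
    hZ2.indicator (s := {ω | t / c < Z ω}) (measurableSet_lt measurable_const hZm)
  have hmin : Integrable (fun ω => Z ω * min (c * Z ω) t) μ := by
    refine (hZ2.const_mul c).mono' (by fun_prop) (ae_of_all _ fun ω => ?_)
    have hmin_nonneg : 0 ≤ min (c * Z ω) t := le_min (mul_nonneg hc (hZ ω)) ht
    rw [Real.norm_of_nonneg (mul_nonneg (hZ ω) hmin_nonneg)]
    nlinarith [min_le_left (c * Z ω) t, hZ ω]
  rw [← integral_sub hZ2 htail, ← integral_const_mul]
  exact integral_mono ((hZ2.sub htail).const_mul c) hmin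
    fun ω => mul_sub_ite_le_mul_min_s18 (hZ ω) hc ht

end

theorem feasible_perturbation_context_general
    {Ω : Type*} [MeasurableSpace Ω] (μ : Measure Ω)
    (ρ R ξ : Ω → ℝ) (hρm : Measurable ρ) (hRm : Measurable R) (hξm : Measurable ξ)
    (hρnn : ∀ ω, 0 ≤ ρ ω) (hRnn : ∀ ω, 0 ≤ R ω)
    (hξ01 : ∀ ω, ξ ω = 0 ∨ ξ ω = 1)
    (V : ℝ) (hV : V = ∫ ω, ξ ω * ρ ω ^ 2 * R ω ^ 2 ∂μ) (hVpos : 0 < V)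
    (hVfin : Integrable (fun ω => ξ ω * ρ ω ^ 2 * R ω ^ 2) μ)
    (n : ℕ)
    (α : ℝ) (hα : α = Real.sqrt (4 * V / n))
    (Δ : Ω → ℝ) (hΔ : ∀ ω, Δ ω = min (ξ ω * ρ ω * R ω * α / V) (1 / 2)) :
    (∀ ω, 0 ≤ Δ ω ∧ Δ ω ≤ 1 / 2)
    ∧ (1 / 4) * (∫ ω, ξ ω * Δ ω ^ 2 ∂μ) ≤ 1 / (n : ℝ)
    ∧ α * (1 - (∫ ω, (if V / (2 * α) < ξ ω * ρ ω * R ω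
          then ξ ω * ρ ω ^ 2 * R ω ^ 2 else 0) ∂μ) / V)
        ≤ ∫ ω, ξ ω * ρ ω * Δ ω * R ω ∂μ := by
  set Z : Ω → ℝ := fun ω => ξ ω * ρ ω * R ω with hZ_def
  set c := α / V with hc_def
  have hc : 0 ≤ c := div_nonneg (hα ▸ Real.sqrt_nonneg _) hVpos.le
  have hZ : ∀ ω, 0 ≤ Z ω := fun ω => by
    rcases hξ01 ω with h | h <;> simp [Z, h, mul_nonneg (hρnn ω) (hRnn ω)]
  have hZm : Measurable Z := by fun_prop
  have hξZ : ∀ ω, ξ ω * ρ ω ^ 2 * R ω ^ 2 = Z ω ^ 2 := fun ω => by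
    rcases hξ01 ω with h | h <;> simp [Z, h, mul_pow]
  have hΔZ : ∀ ω, Δ ω = min (c * Z ω) (1 / 2) := fun ω => by
    rw [hΔ ω, hc_def, hZ_def]; ring_nf
  have hξΔ : ∀ ω, ξ ω * Δ ω ^ 2 = Δ ω ^ 2 := fun ω => by
    rcases hξ01 ω with h | h <;> simp [hΔZ, Z, h]
  have hZ2 : Integrable (fun ω => Z ω ^ 2) μ := hVfin.congr (ae_of_all _ hξZ)
  have hVZ : V = ∫ ω, Z ω ^ 2 ∂μ := by simp only [hV, hξZ]
  have hcV : c ^ 2 * V = 4 / n := by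
    rw [hc_def, div_pow, hα, Real.sq_sqrt (by positivity)]
    field_simp
  refine ⟨fun ω => ⟨?_, ?_⟩, ?_, ?_⟩
  · rw [hΔZ]; exact le_min (mul_nonneg hc (hZ ω)) (by norm_num)
  · rw [hΔZ]; exact min_le_right _ _
  · calc 1 / 4 * ∫ ω, ξ ω * Δ ω ^ 2 ∂μ
        = 1 / 4 * ∫ ω, min (c * Z ω) (1 / 2) ^ 2 ∂μ := by simp_rw [hξΔ, hΔZ]
      _ ≤ 1 / 4 * (c ^ 2 * V) := by
        rw [hVZ]; gcongr; exact integral_min_mul_sq_le hZ2 c (by norm_num)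
      _ = 1 / n := by rw [hcV]; ring
  · have hthreshold : V / (2 * α) = 1 / 2 / c := by
      rw [hc_def, div_div_eq_mul_div]; ring
    calc α * (1 - (∫ ω, (if V / (2 * α) < Z ω then ξ ω * ρ ω ^ 2 * R ω ^ 2 else 0) ∂μ) / V)
        = c * (∫ ω, Z ω ^ 2 ∂μ - ∫ ω, (if 1 / 2 / c < Z ω then Z ω ^ 2 else 0) ∂μ) := by
          simp only [hthreshold, hξZ, ← hVZ, hc_def]
          field_simp
      _ ≤ ∫ ω, Z ω * min (c * Z ω) (1 / 2) ∂μ :=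
        mul_sub_integral_tail_le_integral_mul_min hZm hZ hZ2 hc (by norm_num)
      _ = ∫ ω, ξ ω * ρ ω * Δ ω * R ω ∂μ := integral_congr_ae <| ae_of_all _ fun ω => by
        simp only [hΔZ ω, hZ_def]; ring

/-- Feasible perturbation for the context-richness lower bound. -/
theorem feasible_perturbation_context
    {Ω : Type*} [MeasurableSpace Ω] (μ : Measure Ω) [IsProbabilityMeasure μ]
    (ρ R ξ : Ω → ℝ) (hρm : Measurable ρ) (hRm : Measurable R) (hξm : Measurable ξ)
    (hρnn : ∀ ω, 0 ≤ ρ ω) (hRnn : ∀ ω, 0 ≤ R ω)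
    (hξ01 : ∀ ω, ξ ω = 0 ∨ ξ ω = 1)
    (V : ℝ) (hV : V = ∫ ω, ξ ω * ρ ω ^ 2 * R ω ^ 2 ∂μ) (hVpos : 0 < V)
    (hVfin : Integrable (fun ω => ξ ω * ρ ω ^ 2 * R ω ^ 2) μ)
    (n : ℕ) (hn : 1 ≤ n)
    (α : ℝ) (hα : α = Real.sqrt (4 * V / n))
    (Δ : Ω → ℝ) (hΔ : ∀ ω, Δ ω = min (ξ ω * ρ ω * R ω * α / V) (1 / 2)) :
    (∀ ω, 0 ≤ Δ ω ∧ Δ ω ≤ 1 / 2)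
    ∧ (1 / 4) * (∫ ω, ξ ω * Δ ω ^ 2 ∂μ) ≤ 1 / (n : ℝ)
    ∧ α * (1 - (∫ ω, (if V / (2 * α) < ξ ω * ρ ω * R ω
          then ξ ω * ρ ω ^ 2 * R ω ^ 2 else 0) ∂μ) / V)
        ≤ ∫ ω, ξ ω * ρ ω * Δ ω * R ω ∂μ :=
  feasible_perturbation_context_general μ ρ R ξ hρm hRm hξm hρnn hRnn hξ01 V hV hVpos hVfin n α hα Δ
    hΔ
end
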